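/- arXiv:2503.08618 — 10 statements merged into one kernel-verified Lean document; each statement's English description precedes it below -/
import Mathlib

section
/- Let p(q) = Σ_{l=0}^{k} q^{n_l} a_{n_l} be a lacunary quaternionic polynomial with exponents 0 = n_0 < n_1 < ⋯ < n_k = n, coefficients a_{n_l} = α_{n_l} + β_{n_l} i + γ_{n_l} j + δ_{n_l} k ∈ ℍ with a_{n_k} ≠ 0, no two adjacent coefficients equal (a_{n_l} ≠ a_{n_{l+1}} for l = 0, …, k−1), and suppose α_{n_0} ≤ α_{n_1} ≤ ⋯ ≤ α_{n_k}, β_{n_0} ≥ β_{n_1} ≥ ⋯ ≥ β_{n_k}, and for some index r with 0 ≤ r ≤ k, γ_{n_0} ≤ γ_{n_1} ≤ ⋯ ≤ γ_{n_r} ≥ γ_{n_{r+1}} ≥ ⋯ ≥ γ_{n_k}. For j = 1, …, k set M_{n_j} := sup_{|q|=1} ‖q^{n_j} a_{n_j} − q^{n_{j−1}+1} a_{n_{j−1}}‖ / ‖a_{n_j} − a_{n_{j−1}}‖ and M := max_{1 ≤ j ≤ k} M_{n_j}. Then every zero q ∈ ℍ of p satisfies |q| ≤ (M / |a_{n_k}|)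 { (α_{n_k} − α_{n_0}) + (β_{n_0} − β_{n_k}) + 2 γ_{n_r} − (γ_{n_0} + γ_{n_k}) + 2 Σ_{j=0}^{k−1} |δ_{n_j}| + |δ_{n_k}| + |α_{n_0}| + |β_{n_0}| + |γ_{n_0}| }. -/
set_option maxHeartbeats 1000000

open Real Finset

/-- ℓ¹ bound for the quaternion norm. -/
lemma quat_norm_le_l1 (a : Quaternion ℝ) :
    ‖a‖ ≤ |a.re| + |a.imI| + |a.imJ| + |a.imK| := by
  have h1 : Quaternion.normSq a = ‖a‖ * ‖a‖ := Quaternion.normSq_eq_norm_mul_self a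
  have h2 : Quaternion.normSq a = a.re^2 + a.imI^2 + a.imJ^2 + a.imK^2 := by
    rw [Quaternion.normSq_def']
  nlinarith [norm_nonneg a, abs_nonneg a.re, abs_nonneg a.imI, abs_nonneg a.imJ,
    abs_nonneg a.imK, sq_abs a.re, sq_abs a.imI, sq_abs a.imJ, sq_abs a.imK,
    sq_nonneg (|a.re| + |a.imI|), sq_nonneg (|a.re| + |a.imI| + |a.imJ|)]

lemma quat_norm_coeComplex (z : ℂ) : ‖(z : Quaternion ℝ)‖ = ‖z‖ := by
  have h1 : ‖(z : Quaternion ℝ)‖ * ‖(z : Quaternion ℝ)‖ = Quaternion.normSq (z : Quaternion ℝ) :=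
    (Quaternion.normSq_eq_norm_mul_self _).symm
  have h2 : Quaternion.normSq (z : Quaternion ℝ) = z.re^2 + z.im^2 := by
    rw [Quaternion.normSq_def']; simp
  have h3 : ‖z‖ * ‖z‖ = z.re^2 + z.im^2 := by
    rw [← sq, Complex.sq_norm, Complex.normSq_apply]; ring
  exact (mul_self_inj (norm_nonneg _) (norm_nonneg _)).mp (by rw [h1, h2, h3])

/-- chain of inequalities -/
lemma chain_le (f : ℕ → ℝ) (k : ℕ) (h : ∀ l, l < k → f l ≤ f (l + 1)) :
    ∀ i j, i ≤ j → j ≤ k → f i ≤ f j := by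
  intro i j hij hjk
  induction hij with
  | refl => exact le_refl _
  | @step m hm ih =>
      exact le_trans (ih (Nat.le_of_succ_le hjk)) (h m (Nat.lt_of_succ_le hjk))

lemma chain_ge (f : ℕ → ℝ) (r k : ℕ) (h : ∀ l, r ≤ l → l < k → f (l + 1) ≤ f l) :
    ∀ j, r ≤ j → j ≤ k → f j ≤ f r := by
  intro j hrj hjk
  induction hrj with
  | refl => exact le_refl _
  | @step m hm ih =>
      exact le_trans (h m hm (Nat.lt_of_succ_le hjk)) (ih (Nat.le_of_succ_le hjk))

lemma chain_le_nat (f : ℕ → ℕ) (k : ℕ) (h : ∀ l, l < k → f l < f (l + 1)) :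
    ∀ i j, i ≤ j → j ≤ k → f i ≤ f j := by
  intro i j hij hjk
  induction hij with
  | refl => exact le_refl _
  | @step m hm ih =>
      exact le_trans (ih (Nat.le_of_succ_le hjk)) (le_of_lt (h m (Nat.lt_of_succ_le hjk)))

/-- averaging lemma: if `‖u^n a - u^m b‖ ≤ S` on the unit sphere and `m < n`, then `‖a‖ ≤ S`. -/
lemma avg_bound (n m : ℕ) (hmn : m < n) (a b : Quaternion ℝ) (S : ℝ)
    (hS : ∀ u : Quaternion ℝ, ‖u‖ = 1 → ‖u ^ n * a - u ^ m * b‖ ≤ S) : ‖a‖ ≤ S := by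
  set d : ℕ := n - m with hd
  have hd0 : 0 < d := Nat.sub_pos_of_lt hmn
  set z : ℂ := Complex.exp ((Real.pi / d : ℝ) * Complex.I) with hz
  set u : Quaternion ℝ := (z : Quaternion ℝ) with hu
  have hu1 : ‖u‖ = 1 := by
    rw [hu, quat_norm_coeComplex, hz, Complex.norm_exp_ofReal_mul_I]
  have hzd : z ^ d = -1 := by
    rw [hz, ← Complex.exp_nat_mul]
    rw [show (d : ℂ) * ((Real.pi / d : ℝ) * Complex.I) = Real.pi * Complex.I by
      have : (d : ℂ) ≠ 0 := Nat.cast_ne_zero.mpr hd0.ne'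
      push_cast
      field_simp]
    exact Complex.exp_pi_mul_I
  have hud : u ^ d = -1 := by
    rw [hu, show ((z : Quaternion ℝ)) ^ d = ((z ^ d : ℂ) : Quaternion ℝ) from (map_pow Quaternion.ofComplex z d).symm, hzd]
    ext <;> simp <;> rfl
  have hun : u ^ n = -(u ^ m) := by
    have : n = m + d := by omega
    rw [this, pow_add, hud, mul_neg, mul_one]
  have h1 : ‖a + b‖ ≤ S := by
    have := hS u hu1
    rw [hun] at this
    calc ‖a + b‖ = ‖u ^ m‖ * ‖a + b‖ := by
          rw [norm_pow, hu1, one_pow, one_mul]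
      _ = ‖u ^ m * (a + b)‖ := (norm_mul _ _).symm
      _ = ‖-(u ^ m * (a + b))‖ := (norm_neg _).symm
      _ = ‖-(u ^ m) * a - u ^ m * b‖ := by
          congr 1
          noncomm_ring
      _ ≤ S := this
  have h2 : ‖a - b‖ ≤ S := by
    have := hS 1 (norm_one)
    simpa using this
  have : ‖a‖ * 2 ≤ ‖a + b‖ + ‖a - b‖ := by
    calc ‖a‖ * 2 = ‖(a + b) + (a - b)‖ := by
          rw [show (a + b) + (a - b) = (2 : ℝ) • a by module, norm_smul]
          simp [mul_comm]
      _ ≤ ‖a + b‖ + ‖a - b‖ := norm_add_le _ _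
  linarith

/-- key growth bound for `‖q‖ ≥ 1`. -/
lemma key_bound (n m : ℕ) (hmn : m ≤ n) (a b : Quaternion ℝ) (S : ℝ)
    (hS : ∀ u : Quaternion ℝ, ‖u‖ = 1 → ‖u ^ n * a - u ^ m * b‖ ≤ S)
    (q : Quaternion ℝ) (hq1 : 1 ≤ ‖q‖) :
    ‖q ^ n * a - q ^ m * b‖ ≤ ‖q‖ ^ n * S := by
  set t : ℝ := ‖q‖ with ht
  have ht0 : 0 < t := lt_of_lt_of_le one_pos hq1
  obtain ⟨u, hu1, hqtu⟩ : ∃ u : Quaternion ℝ, ‖u‖ = 1 ∧ q = (t : ℝ) • u := by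
    refine ⟨(t⁻¹ : ℝ) • q, ?_, ?_⟩
    · rw [norm_smul, norm_inv, Real.norm_eq_abs, abs_of_pos ht0, inv_mul_cancel₀ ht0.ne']
    · rw [smul_smul, mul_inv_cancel₀ ht0.ne', one_smul]
  set s : ℝ := t ^ m / t ^ n with hs
  have hs0 : 0 < s := div_pos (pow_pos ht0 m) (pow_pos ht0 n)
  have hs1 : s ≤ 1 := by
    rw [hs, div_le_one (pow_pos ht0 n)]
    exact pow_le_pow_right₀ hq1 hmn
  have hSa : ‖a‖ ≤ S ∨ s = 1 := by
    rcases eq_or_lt_of_le hmn with h | h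
    · right
      rw [hs, h, div_self (pow_pos ht0 n).ne']
    · left
      exact avg_bound n m h a b S hS
  have hts : t ^ n * s = t ^ m := by
    rw [hs]; field_simp
  have key : q ^ n * a - q ^ m * b = (t ^ n : ℝ) • (u ^ n * a - s • (u ^ m * b)) := by
    calc q ^ n * a - q ^ m * b
        = ((t ^ n : ℝ) • u ^ n) * a - ((t ^ m : ℝ) • u ^ m) * b := by
          rw [hqtu, smul_pow, smul_pow]
      _ = (t ^ n : ℝ) • (u ^ n * a) - (t ^ m : ℝ) • (u ^ m * b) := by
          rw [smul_mul_assoc, smul_mul_assoc]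
      _ = (t ^ n : ℝ) • (u ^ n * a - s • (u ^ m * b)) := by
          rw [smul_sub, smul_smul, hts]
  rw [key, norm_smul, Real.norm_eq_abs, abs_of_pos (pow_pos ht0 n)]
  have hconv : u ^ n * a - s • (u ^ m * b)
      = (1 - s) • (u ^ n * a) + s • (u ^ n * a - u ^ m * b) := by module
  have hbound : ‖u ^ n * a - s • (u ^ m * b)‖ ≤ S := by
    rw [hconv]
    have h1 : ‖(1 - s) • (u ^ n * a)‖ = (1 - s) * ‖a‖ := by
      rw [norm_smul, Real.norm_eq_abs, abs_of_nonneg (by linarith), norm_mul, norm_pow, hu1,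
        one_pow, one_mul]
    have h2 : ‖s • (u ^ n * a - u ^ m * b)‖ ≤ s * S := by
      rw [norm_smul, Real.norm_eq_abs, abs_of_pos hs0]
      exact mul_le_mul_of_nonneg_left (hS u hu1) hs0.le
    rcases hSa with hSa | hSa
    · calc ‖(1 - s) • (u ^ n * a) + s • (u ^ n * a - u ^ m * b)‖
          ≤ ‖(1 - s) • (u ^ n * a)‖ + ‖s • (u ^ n * a - u ^ m * b)‖ := norm_add_le _ _
        _ ≤ (1 - s) * ‖a‖ + s * S := by rw [h1]; linarith
        _ ≤ (1 - s) * S + s * S := by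
            have := mul_le_mul_of_nonneg_left hSa (by linarith : (0:ℝ) ≤ 1 - s)
            linarith
        _ = S := by ring
    · rw [hSa]
      simp only [sub_self, zero_smul, one_smul, zero_add]
      exact hS u hu1
  exact mul_le_mul_of_nonneg_left hbound (pow_pos ht0 n).le
/-- Quaternionic Eneström–Kakeya-type theorem for lacunary polynomials
`p(q) = ∑_{l=0}^{k} q^(N l) * a l` with monotone real parts, antitone `i`-parts and
unimodal `j`-parts of the coefficients. -/
theorem stmt_1 (k : ℕ) (N : ℕ → ℕ) (a : ℕ → Quaternion ℝ)
    (hN0 : N 0 = 0) (hNmono : ∀ l, l < k → N l < N (l + 1))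
    (hak : a k ≠ 0)
    (hadj : ∀ l, l < k → a l ≠ a (l + 1))
    (hα : ∀ l, l < k → (a l).re ≤ (a (l + 1)).re)
    (hβ : ∀ l, l < k → (a (l + 1)).imI ≤ (a l).imI)
    (r : ℕ) (hr : r ≤ k)
    (hγ₁ : ∀ l, l < r → (a l).imJ ≤ (a (l + 1)).imJ)
    (hγ₂ : ∀ l, r ≤ l → l < k → (a (l + 1)).imJ ≤ (a l).imJ)
    (Mj : ℕ → ℝ)
    (hMj : ∀ j, 1 ≤ j → j ≤ k →
      Mj j = ⨆ q : {q : Quaternion ℝ // ‖q‖ = 1},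
        ‖(q : Quaternion ℝ) ^ (N j) * a j -
          (q : Quaternion ℝ) ^ (N (j - 1) + 1) * a (j - 1)‖ / ‖a j - a (j - 1)‖)
    (M : ℝ) (hM : M = ⨆ j ∈ Finset.Icc 1 k, Mj j)
    (q : Quaternion ℝ) (hq : ∑ l ∈ Finset.range (k + 1), q ^ (N l) * a l = 0) :
    ‖q‖ ≤ (M / ‖a k‖) * (((a k).re - (a 0).re) + ((a 0).imI - (a k).imI) +
      2 * (a r).imJ - ((a 0).imJ + (a k).imJ) +
      2 * (∑ j ∈ Finset.range k, |(a j).imK|) + |(a k).imK| +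
      |(a 0).re| + |(a 0).imI| + |(a 0).imJ|) := by
  rcases Nat.eq_zero_or_pos k with hk0 | hk
  · exfalso
    apply hak
    subst hk0
    simpa [hN0] using hq
  have hak' : 0 < ‖a k‖ := norm_pos_iff.mpr hak
  have hcne : ∀ l, l < k → (0:ℝ) < ‖a (l+1) - a l‖ := fun l hl =>
    norm_pos_iff.mpr (sub_ne_zero.mpr (Ne.symm (hadj l hl)))
  haveI : Nonempty {q : Quaternion ℝ // ‖q‖ = 1} := ⟨⟨1, norm_one⟩⟩
  have hbdd : ∀ l, l < k → BddAbove (Set.range fun u : {q : Quaternion ℝ // ‖q‖ = 1} =>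
      ‖(u : Quaternion ℝ) ^ (N (l+1)) * a (l+1) -
        (u : Quaternion ℝ) ^ (N l + 1) * a l‖ / ‖a (l+1) - a l‖) := by
    intro l hl
    refine ⟨(‖a (l+1)‖ + ‖a l‖) / ‖a (l+1) - a l‖, ?_⟩
    rintro x ⟨u, rfl⟩
    have h1 : ‖(u : Quaternion ℝ) ^ (N (l+1)) * a (l+1) -
        (u : Quaternion ℝ) ^ (N l + 1) * a l‖ ≤ ‖a (l+1)‖ + ‖a l‖ := by
      calc ‖(u : Quaternion ℝ) ^ (N (l+1)) * a (l+1) -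
          (u : Quaternion ℝ) ^ (N l + 1) * a l‖
          ≤ ‖(u : Quaternion ℝ) ^ (N (l+1)) * a (l+1)‖ +
            ‖(u : Quaternion ℝ) ^ (N l + 1) * a l‖ := norm_sub_le _ _
        _ = ‖a (l+1)‖ + ‖a l‖ := by
            rw [norm_mul, norm_mul, norm_pow, norm_pow, u.2, one_pow, one_pow, one_mul, one_mul]
    exact div_le_div_of_nonneg_right h1 (hcne l hl).le
  have hMjeq : ∀ l, l < k → Mj (l+1) = ⨆ u : {q : Quaternion ℝ // ‖q‖ = 1},
      ‖(u : Quaternion ℝ) ^ (N (l+1)) * a (l+1) -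
        (u : Quaternion ℝ) ^ (N l + 1) * a l‖ / ‖a (l+1) - a l‖ := by
    intro l hl
    have := hMj (l+1) (Nat.le_add_left 1 l) hl
    simpa using this
  have hMj1 : ∀ l, l < k → (1:ℝ) ≤ Mj (l+1) := by
    intro l hl
    rw [hMjeq l hl]
    have h := le_ciSup (hbdd l hl) ⟨1, norm_one⟩
    simpa [div_self (hcne l hl).ne'] using h
  have hS : ∀ l, l < k → ∀ u : Quaternion ℝ, ‖u‖ = 1 →
      ‖u ^ (N (l+1)) * a (l+1) - u ^ (N l + 1) * a l‖ ≤ Mj (l+1) * ‖a (l+1) - a l‖ := by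
    intro l hl u hu
    have h := le_ciSup (hbdd l hl) ⟨u, hu⟩
    rw [← hMjeq l hl] at h
    exact (div_le_iff₀ (hcne l hl)).mp h
  have hMtop : ∀ j, j ∈ Finset.Icc 1 k → Mj j ≤ M := by
    intro j hj
    rw [hM]
    have hb : BddAbove (Set.range fun i => ⨆ _ : i ∈ Finset.Icc 1 k, Mj i) := by
      refine ⟨max 0 ((Finset.Icc 1 k).sup' ⟨1, Finset.mem_Icc.mpr ⟨le_refl 1, hk⟩⟩ Mj), ?_⟩
      rintro x ⟨i, rfl⟩
      dsimp only
      by_cases hi : i ∈ Finset.Icc 1 k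
      · rw [ciSup_pos hi]
        exact le_max_of_le_right (Finset.le_sup' Mj hi)
      · haveI : IsEmpty (i ∈ Finset.Icc 1 k) := ⟨hi⟩
        rw [Real.iSup_of_isEmpty]
        exact le_max_left _ _
    calc Mj j = ⨆ _ : j ∈ Finset.Icc 1 k, Mj j := (ciSup_pos (f := fun _ : j ∈ Finset.Icc 1 k => Mj j) hj).symm
      _ ≤ _ := le_ciSup hb j
  have hM1 : (1:ℝ) ≤ M :=
    le_trans (by simpa using hMj1 0 hk)
      (hMtop 1 (Finset.mem_Icc.mpr ⟨le_refl 1, hk⟩))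
  have hM0 : (0:ℝ) ≤ M := by linarith
  have hMjM : ∀ l, l < k → Mj (l+1) ≤ M := fun l hl =>
    hMtop (l+1) (Finset.mem_Icc.mpr ⟨Nat.le_add_left 1 l, hl⟩)
  set B : ℝ := (((a k).re - (a 0).re) + ((a 0).imI - (a k).imI) +
      2 * (a r).imJ - ((a 0).imJ + (a k).imJ) +
      2 * (∑ j ∈ Finset.range k, |(a j).imK|) + |(a k).imK| +
      |(a 0).re| + |(a 0).imI| + |(a 0).imJ|) with hB
  have hα0k : (a 0).re ≤ (a k).re :=
    chain_le (fun l => (a l).re) k hα 0 k (Nat.zero_le k) le_rfl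
  have hβk0 : (a k).imI ≤ (a 0).imI := by
    have := chain_le (fun l => -(a l).imI) k (fun l hl => by simpa using hβ l hl) 0 k
      (Nat.zero_le k) le_rfl
    simpa using this
  have hγ0r : (a 0).imJ ≤ (a r).imJ :=
    chain_le (fun l => (a l).imJ) r hγ₁ 0 r (Nat.zero_le r) le_rfl
  have hγkr : (a k).imJ ≤ (a r).imJ :=
    chain_ge (fun l => (a l).imJ) r k hγ₂ k hr le_rfl
  have hδ0 : (0:ℝ) ≤ ∑ j ∈ Finset.range k, |(a j).imK| :=
    Finset.sum_nonneg (fun _ _ => abs_nonneg _)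
  have hBk : ‖a k‖ ≤ B := by
    have l1 := quat_norm_le_l1 (a k)
    rw [hB]
    rcases abs_cases (a k).re with h1|h1 <;> rcases abs_cases (a k).imI with h2|h2 <;>
      rcases abs_cases (a k).imJ with h3|h3 <;>
      linarith [le_abs_self (a 0).re, neg_abs_le (a 0).re, le_abs_self (a 0).imI,
        neg_abs_le (a 0).imI, le_abs_self (a 0).imJ, neg_abs_le (a 0).imJ]
  -- ℓ¹ bound of coefficient differences
  have hΔl1 : ∀ l, l < k → ‖a (l+1) - a l‖ ≤ ((a (l+1)).re - (a l).re) +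
      ((a l).imI - (a (l+1)).imI) + |(a (l+1)).imJ - (a l).imJ| +
      (|(a (l+1)).imK| + |(a l).imK|) := by
    intro l hl
    have h := quat_norm_le_l1 (a (l+1) - a l)
    have e1 : (a (l+1) - a l).re = (a (l+1)).re - (a l).re := by simp
    have e2 : (a (l+1) - a l).imI = (a (l+1)).imI - (a l).imI := by simp
    have e3 : (a (l+1) - a l).imJ = (a (l+1)).imJ - (a l).imJ := by simp
    have e4 : (a (l+1) - a l).imK = (a (l+1)).imK - (a l).imK := by simp
    rw [e1, e2, e3, e4] at h
    rw [abs_of_nonneg (sub_nonneg.mpr (hα l hl))] at h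
    rw [abs_of_nonpos (sub_nonpos.mpr (hβ l hl))] at h
    have h4 : |(a (l+1)).imK - (a l).imK| ≤ |(a (l+1)).imK| + |(a l).imK| := abs_sub _ _
    linarith
  -- telescoping of the j-parts
  set F : ℕ → ℝ := fun l => 2 * (a (min l r)).imJ - (a l).imJ with hF
  have hγterm : ∀ l, l < k → |(a (l+1)).imJ - (a l).imJ| = F (l+1) - F l := by
    intro l hl
    by_cases hlr : l < r
    · have h1 : min (l+1) r = l+1 := min_eq_left hlr
      have h2 : min l r = l := min_eq_left (le_of_lt hlr)
      rw [abs_of_nonneg (sub_nonneg.mpr (hγ₁ l hlr)), hF]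
      simp only [h1, h2]
      ring
    · push_neg at hlr
      have h1 : min (l+1) r = r := min_eq_right (le_trans hlr (Nat.le_succ l))
      have h2 : min l r = r := min_eq_right hlr
      rw [abs_of_nonpos (sub_nonpos.mpr (hγ₂ l hlr hl)), hF]
      simp only [h1, h2]
      ring
  have hγsum : ∑ l ∈ Finset.range k, |(a (l+1)).imJ - (a l).imJ|
      = 2 * (a r).imJ - (a k).imJ - (a 0).imJ := by
    rw [Finset.sum_congr rfl (fun l hl => hγterm l (Finset.mem_range.mp hl)),
      Finset.sum_range_sub F k]
    rw [hF]
    simp only [min_eq_right hr, Nat.min_eq_left (Nat.zero_le r)]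
    ring
  have hαsum : ∑ l ∈ Finset.range k, ((a (l+1)).re - (a l).re) = (a k).re - (a 0).re :=
    Finset.sum_range_sub (fun l => (a l).re) k
  have hβsum : ∑ l ∈ Finset.range k, ((a l).imI - (a (l+1)).imI) = (a 0).imI - (a k).imI :=
    Finset.sum_range_sub' (fun l => (a l).imI) k
  have hδsum : ∑ l ∈ Finset.range k, |(a (l+1)).imK|
      = (∑ j ∈ Finset.range k, |(a j).imK|) + |(a k).imK| - |(a 0).imK| := by
    have h1 : ∑ l ∈ Finset.range k, |(a (l+1)).imK|
        = (∑ j ∈ Finset.range (k+1), |(a j).imK|) - |(a 0).imK| := by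
      rw [Finset.sum_range_succ' (fun j => |(a j).imK|) k]
      ring
    rw [h1, Finset.sum_range_succ]
  have hsumS : ∑ l ∈ Finset.range k, Mj (l+1) * ‖a (l+1) - a l‖
      ≤ M * (B - (|(a 0).re| + |(a 0).imI| + |(a 0).imJ| + |(a 0).imK|)) := by
    calc ∑ l ∈ Finset.range k, Mj (l+1) * ‖a (l+1) - a l‖
        ≤ ∑ l ∈ Finset.range k, M * (((a (l+1)).re - (a l).re) +
            ((a l).imI - (a (l+1)).imI) + |(a (l+1)).imJ - (a l).imJ| +
            (|(a (l+1)).imK| + |(a l).imK|)) := by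
          apply Finset.sum_le_sum
          intro l hl'
          have hl := Finset.mem_range.mp hl'
          exact mul_le_mul (hMjM l hl) (hΔl1 l hl) (norm_nonneg _) hM0
      _ = M * ∑ l ∈ Finset.range k, (((a (l+1)).re - (a l).re) +
            ((a l).imI - (a (l+1)).imI) + |(a (l+1)).imJ - (a l).imJ| +
            (|(a (l+1)).imK| + |(a l).imK|)) := (Finset.mul_sum _ _ _).symm
      _ = M * (B - (|(a 0).re| + |(a 0).imI| + |(a 0).imJ| + |(a 0).imK|)) := by
          simp only [Finset.sum_add_distrib]
          rw [hαsum, hβsum, hγsum, hδsum, hB]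
          ring
  have htotal : ‖a 0‖ + ∑ l ∈ Finset.range k, Mj (l+1) * ‖a (l+1) - a l‖ ≤ M * B := by
    have h0 : ‖a 0‖ ≤ M * (|(a 0).re| + |(a 0).imI| + |(a 0).imJ| + |(a 0).imK|) := by
      have h1 := quat_norm_le_l1 (a 0)
      have h2 : (0:ℝ) ≤ |(a 0).re| + |(a 0).imI| + |(a 0).imJ| + |(a 0).imK| := by positivity
      nlinarith
    linarith
  rcases le_or_gt ‖q‖ 1 with hq1 | hq1
  · have h1 : (1:ℝ) ≤ B / ‖a k‖ := (one_le_div hak').mpr hBk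
    calc ‖q‖ ≤ 1 := hq1
      _ ≤ M * (B / ‖a k‖) := by nlinarith
      _ = (M / ‖a k‖) * B := by ring
  · set t : ℝ := ‖q‖ with ht
    have ht0 : (0:ℝ) < t := lt_trans one_pos hq1
    have hNk : ∀ j, j ≤ k → N j ≤ N k := fun j hj => chain_le_nat N k hNmono j k hj le_rfl
    have e1 : ∑ l ∈ Finset.range k, q ^ (N (l+1)) * a (l+1) = - (a 0) := by
      have h1 := Finset.sum_range_succ' (fun l => q ^ (N l) * a l) k
      rw [hq] at h1
      have h2 : q ^ (N 0) * a 0 = a 0 := by rw [hN0, pow_zero, one_mul]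
      rw [h2] at h1
      linear_combination (norm := abel) -h1
    have e3 : ∑ l ∈ Finset.range k, q ^ (N l) * a l = - (q ^ (N k) * a k) := by
      have h1 := Finset.sum_range_succ (fun l => q ^ (N l) * a l) k
      rw [hq] at h1
      linear_combination (norm := abel) -h1
    have e2 : ∑ l ∈ Finset.range k, q ^ (N l + 1) * a l = - (q ^ (N k + 1) * a k) := by
      have h1 : ∑ l ∈ Finset.range k, q ^ (N l + 1) * a l
          = q * ∑ l ∈ Finset.range k, q ^ (N l) * a l := by
        rw [Finset.mul_sum]
        apply Finset.sum_congr rfl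
        intro l _
        rw [pow_succ', mul_assoc]
      rw [h1, e3, mul_neg, ← mul_assoc, ← pow_succ']
    have hiden : q ^ (N k + 1) * a k = a 0 +
        ∑ l ∈ Finset.range k, (q ^ (N (l+1)) * a (l+1) - q ^ (N l + 1) * a l) := by
      rw [Finset.sum_sub_distrib, e1, e2]
      abel
    have hterm : ∀ l ∈ Finset.range k,
        ‖q ^ (N (l+1)) * a (l+1) - q ^ (N l + 1) * a l‖
          ≤ t ^ (N k) * (Mj (l+1) * ‖a (l+1) - a l‖) := by
      intro l hl'
      have hl := Finset.mem_range.mp hl'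
      have h1 := key_bound (N (l+1)) (N l + 1) (hNmono l hl) (a (l+1)) (a l)
        (Mj (l+1) * ‖a (l+1) - a l‖) (hS l hl) q hq1.le
      have hSpos : (0:ℝ) ≤ Mj (l+1) * ‖a (l+1) - a l‖ :=
        mul_nonneg (le_trans zero_le_one (hMj1 l hl)) (norm_nonneg _)
      have h2 : t ^ (N (l+1)) ≤ t ^ (N k) := pow_le_pow_right₀ hq1.le (hNk (l+1) hl)
      exact le_trans h1 (mul_le_mul_of_nonneg_right h2 hSpos)
    have htNk1 : (1:ℝ) ≤ t ^ (N k) := one_le_pow₀ hq1.le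
    have hnorm2 : t ^ (N k) * (t * ‖a k‖) ≤ t ^ (N k) * (M * B) := by
      calc t ^ (N k) * (t * ‖a k‖) = t ^ (N k + 1) * ‖a k‖ := by rw [pow_succ]; ring
        _ = ‖q ^ (N k + 1) * a k‖ := by rw [norm_mul, norm_pow]
        _ ≤ ‖a 0‖ + ∑ l ∈ Finset.range k,
              ‖q ^ (N (l+1)) * a (l+1) - q ^ (N l + 1) * a l‖ := by
            rw [hiden]
            exact le_trans (norm_add_le _ _) (by gcongr; exact norm_sum_le _ _)
        _ ≤ ‖a 0‖ + ∑ l ∈ Finset.range k, t ^ (N k) * (Mj (l+1) * ‖a (l+1) - a l‖) := by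
            gcongr with l hl
            exact hterm l hl
        _ = ‖a 0‖ + t ^ (N k) * ∑ l ∈ Finset.range k, Mj (l+1) * ‖a (l+1) - a l‖ := by
            rw [Finset.mul_sum]
        _ ≤ t ^ (N k) * ‖a 0‖ + t ^ (N k) * ∑ l ∈ Finset.range k, Mj (l+1) * ‖a (l+1) - a l‖ := by
            have := norm_nonneg (a 0)
            nlinarith
        _ = t ^ (N k) * (‖a 0‖ + ∑ l ∈ Finset.range k, Mj (l+1) * ‖a (l+1) - a l‖) := by ring
        _ ≤ t ^ (N k) * (M * B) := by
            apply mul_le_mul_of_nonneg_left htotal (le_of_lt (pow_pos ht0 _))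
    have hfin : t * ‖a k‖ ≤ M * B :=
      le_of_mul_le_mul_left hnorm2 (pow_pos ht0 _)
    rw [show (M / ‖a k‖) * B = (M * B) / ‖a k‖ by ring]
    exact (le_div_iff₀ hak').mpr hfin
end

section
/- Let p(q) = Σ_{l=0}^{k} q^{n_l} a_{n_l} be a lacunary quaternionic polynomial with exponents 0 = n_0 < n_1 < ⋯ < n_k = n, coefficients of the form a_{n_l} = α_{n_l} + β_{n_l} i (real and i-parts only) with a_{n_k} ≠ 0, no two adjacent coefficients equal (a_{n_l} ≠ a_{n_{l+1}} for l = 0, …, k−1), and suppose α_{n_0} ≤ α_{n_1} ≤ ⋯ ≤ α_{n_k} and β_{n_0} ≥ β_{n_1} ≥ ⋯ ≥ β_{n_k}. For j = 1, …, k set M_{n_j} := sup_{|q|=1} ‖q^{n_j} a_{n_j} − q^{n_{j−1}+1} a_{n_{j−1}}‖ / ‖a_{n_j} − a_{n_{j−1}}‖ and M := max_{1 ≤ j ≤ k} M_{n_j}. Then every zero q ∈ ℍ of p satisfies |q| ≤ (M / |a_{n_k}|) { (α_{n_k} − α_{n_0} + |α_{n_0}|) + (β_{n_0} − β_{n_k}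 + |β_{n_0}|) }. -/
open Real Finset Quaternion RealInnerProductSpace

set_option maxHeartbeats 1000000

lemma sq_unit_im (I : Quaternion ℝ) (hre : I.re = 0) (hI : ‖I‖ = 1) : I * I = -1 := by
  have hn : Quaternion.normSq I = 1 := by
    rw [Quaternion.normSq_eq_norm_mul_self, hI]; ring
  rw [Quaternion.normSq_def'] at hn
  ext <;> simp [Quaternion.re_mul, Quaternion.imI_mul, Quaternion.imJ_mul, Quaternion.imK_mul, hre] <;> nlinarith [hn]


noncomputable def phi (I : Quaternion ℝ) (z : ℂ) : Quaternion ℝ := (z.re : Quaternion ℝ) + z.im • I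

lemma phi_mul (I : Quaternion ℝ) (hre : I.re = 0) (h2 : I * I = -1) (z w : ℂ) :
    phi I (z * w) = phi I z * phi I w := by
  have e1 : I.re * I.re - I.imI * I.imI - I.imJ * I.imJ - I.imK * I.imK = -1 := by
    have := congrArg QuaternionAlgebra.re h2
    simpa [Quaternion.re_mul] using this
  rw [hre] at e1
  ext
  · simp [phi, Quaternion.re_mul, Complex.mul_re, Complex.mul_im, hre]
    linear_combination (-(z.im * w.im)) * e1
  · simp [phi, Quaternion.imI_mul, Complex.mul_re, Complex.mul_im, hre]
    ring
  · simp [phi, Quaternion.imJ_mul, Complex.mul_re, Complex.mul_im, hre]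
    ring
  · simp [phi, Quaternion.imK_mul, Complex.mul_re, Complex.mul_im, hre]
    ring

lemma phi_norm (I : Quaternion ℝ) (hre : I.re = 0) (hI : ‖I‖ = 1) (z : ℂ) :
    ‖phi I z‖ = ‖z‖ := by
  have hn : Quaternion.normSq I = 1 := by
    rw [Quaternion.normSq_eq_norm_mul_self, hI]; ring
  rw [Quaternion.normSq_def', hre] at hn
  have h2 : Quaternion.normSq (phi I z) = z.re ^ 2 + z.im ^ 2 := by
    rw [Quaternion.normSq_def']
    simp only [phi, Quaternion.re_add, Quaternion.re_coe, Quaternion.re_smul, Quaternion.imI_add,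
      Quaternion.imI_coe, Quaternion.imI_smul, Quaternion.imJ_add, Quaternion.imJ_coe,
      Quaternion.imJ_smul, Quaternion.imK_add, Quaternion.imK_coe, Quaternion.imK_smul, hre,
      smul_eq_mul]
    linear_combination (z.im ^ 2) * hn
  have h3 : ‖phi I z‖ * ‖phi I z‖ = z.re ^ 2 + z.im ^ 2 := by
    rw [← Quaternion.normSq_eq_norm_mul_self, h2]
  have h4 : ‖z‖ * ‖z‖ = z.re ^ 2 + z.im ^ 2 := by
    rw [← sq, ← Complex.normSq_eq_norm_sq, Complex.normSq_apply]; ring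
  nlinarith [norm_nonneg (phi I z), norm_nonneg z]

lemma phi_pow (I : Quaternion ℝ) (hre : I.re = 0) (h2 : I * I = -1) (z : ℂ) (s : ℕ) :
    phi I (z ^ s) = (phi I z) ^ s := by
  induction s with
  | zero => simp [phi]
  | succ s ih => rw [pow_succ, pow_succ, phi_mul I hre h2, ih]



lemma ek_slice (q : Quaternion ℝ) : ∃ (I : Quaternion ℝ) (z : ℂ),
    I.re = 0 ∧ ‖I‖ = 1 ∧ phi I z = q ∧ ‖z‖ = ‖q‖ := by
  by_cases him : q.im = 0
  · have hq : q = (q.re : Quaternion ℝ) := by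
      conv_lhs => rw [← Quaternion.re_add_im q]
      rw [him, add_zero]
    refine ⟨((Complex.I : ℂ) : Quaternion ℝ), (q.re : ℂ), ?_, ?_, ?_, ?_⟩
    · simp [Quaternion.re_coeComplex]
    · have h1 : Quaternion.normSq ((Complex.I : ℂ) : Quaternion ℝ) = 1 := by
        rw [Quaternion.normSq_def']
        simp [Quaternion.re_coeComplex, Quaternion.imI_coeComplex, Quaternion.imJ_coeComplex,
          Quaternion.imK_coeComplex]
      rw [Quaternion.normSq_eq_norm_mul_self] at h1
      nlinarith [norm_nonneg ((Complex.I : ℂ) : Quaternion ℝ)]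
    · rw [phi]; simp [← hq]
    · rw [hq, Quaternion.norm_coe]
      simp [Complex.norm_real]
  · have hpos : 0 < ‖q.im‖ := norm_pos_iff.mpr him
    refine ⟨‖q.im‖⁻¹ • q.im, ⟨q.re, ‖q.im‖⟩, ?_, ?_, ?_, ?_⟩
    · simp
    · rw [norm_smul, norm_inv, norm_norm, inv_mul_cancel₀ hpos.ne']
    · show (q.re : Quaternion ℝ) + ‖q.im‖ • (‖q.im‖⁻¹ • q.im) = q
      rw [smul_smul, mul_inv_cancel₀ hpos.ne', one_smul, Quaternion.re_add_im]
    · have h1 : ‖(⟨q.re, ‖q.im‖⟩ : ℂ)‖ * ‖(⟨q.re, ‖q.im‖⟩ : ℂ)‖ = q.re ^ 2 + ‖q.im‖ ^ 2 := by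
        rw [← sq, ← Complex.normSq_eq_norm_sq, Complex.normSq_apply]; ring
      have h2 : ‖q.im‖ * ‖q.im‖ = q.imI ^ 2 + q.imJ ^ 2 + q.imK ^ 2 := by
        rw [← Quaternion.normSq_eq_norm_mul_self, Quaternion.normSq_def']
        simp [QuaternionAlgebra.im]
      have h3 : ‖q‖ * ‖q‖ = q.re ^ 2 + q.imI ^ 2 + q.imJ ^ 2 + q.imK ^ 2 := by
        rw [← Quaternion.normSq_eq_norm_mul_self, Quaternion.normSq_def']
      nlinarith [norm_nonneg q, norm_nonneg (⟨q.re, ‖q.im‖⟩ : ℂ), norm_nonneg q.im]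

lemma inner_slice_mul (I c d : Quaternion ℝ) (X Y : ℝ) :
    (⟪((X : Quaternion ℝ) + Y • I) * c, d⟫ : ℝ) = X * ⟪c, d⟫ + Y * ⟪I * c, d⟫ := by
  have h1 : ((X : Quaternion ℝ) + Y • I) * c = X • c + Y • (I * c) := by
    rw [add_mul, smul_mul_assoc, Quaternion.coe_mul_eq_smul]
  rw [h1, inner_add_left, real_inner_smul_left, real_inner_smul_left]

lemma key (c d : Quaternion ℝ) (n m : ℕ) (hmn : m ≤ n) (q : Quaternion ℝ) (hr : 1 ≤ ‖q‖) :
    ‖q ^ n * c - q ^ m * d‖ ≤ ‖q‖ ^ n *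
      ⨆ u : {q : Quaternion ℝ // ‖q‖ = 1}, ‖(u : Quaternion ℝ) ^ n * c - (u : Quaternion ℝ) ^ m * d‖ := by
  have hbdd : BddAbove (Set.range fun u : {q : Quaternion ℝ // ‖q‖ = 1} =>
      ‖(u : Quaternion ℝ) ^ n * c - (u : Quaternion ℝ) ^ m * d‖) := by
    refine ⟨‖c‖ + ‖d‖, ?_⟩
    rintro x ⟨u, rfl⟩
    calc ‖(u : Quaternion ℝ) ^ n * c - (u : Quaternion ℝ) ^ m * d‖
        ≤ ‖(u : Quaternion ℝ) ^ n * c‖ + ‖(u : Quaternion ℝ) ^ m * d‖ := norm_sub_le _ _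
      _ = ‖c‖ + ‖d‖ := by rw [norm_mul, norm_mul, norm_pow, norm_pow, u.2, one_pow, one_pow,
            one_mul, one_mul]
  set S := ⨆ u : {q : Quaternion ℝ // ‖q‖ = 1}, ‖(u : Quaternion ℝ) ^ n * c - (u : Quaternion ℝ) ^ m * d‖ with hS
  have hS_ge : ∀ u : {q : Quaternion ℝ // ‖q‖ = 1},
      ‖(u : Quaternion ℝ) ^ n * c - (u : Quaternion ℝ) ^ m * d‖ ≤ S := fun u => le_ciSup hbdd u
  have hS0 : 0 ≤ S := le_trans (norm_nonneg _) (hS_ge ⟨1, norm_one⟩)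
  have hr0 : (0 : ℝ) ≤ ‖q‖ := norm_nonneg q
  by_cases heq : n = m
  · subst heq
    have h1 : q ^ n * c - q ^ n * d = q ^ n * (c - d) := by rw [mul_sub]
    have h2 : (1 : Quaternion ℝ) ^ n * c - (1 : Quaternion ℝ) ^ n * d = c - d := by simp
    calc ‖q ^ n * c - q ^ n * d‖ = ‖q‖ ^ n * ‖c - d‖ := by rw [h1, norm_mul, norm_pow]
      _ ≤ ‖q‖ ^ n * S := by
          refine mul_le_mul_of_nonneg_left ?_ (by positivity)
          have h3 := hS_ge ⟨1, norm_one⟩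
          rwa [h2] at h3
  · have hlt : m < n := lt_of_le_of_ne hmn (Ne.symm heq)
    set s := n - m with hs
    have hs1 : 1 ≤ s := by omega
    have hms : m + s = n := by omega
    obtain ⟨I, z, hIre, hInorm, hqeq, hzabs⟩ := ek_slice q
    have hII : I * I = -1 := sq_unit_im I hIre hInorm
    set A := (⟪c, d⟫ : ℝ) with hA
    set B := (⟪I * c, d⟫ : ℝ) with hB
    set W := Real.sqrt (A ^ 2 + B ^ 2) with hWdef
    have hW0 : 0 ≤ W := Real.sqrt_nonneg _
    have hW2 : W ^ 2 = A ^ 2 + B ^ 2 := Real.sq_sqrt (by positivity)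
    set X := (z ^ s).re with hX
    set Y := (z ^ s).im with hY
    set ρ := ‖q‖ ^ s with hρ
    have hρ1 : 1 ≤ ρ := one_le_pow₀ hr
    have hqs : q ^ s = (X : Quaternion ℝ) + Y • I := by
      rw [← hqeq, ← phi_pow I hIre hII]; rfl
    have hXY : X ^ 2 + Y ^ 2 = ρ ^ 2 := by
      have habs : ‖z ^ s‖ = ‖q‖ ^ s := by rw [norm_pow, hzabs]
      calc X ^ 2 + Y ^ 2 = ‖(z ^ s)‖ * ‖(z ^ s)‖ := by
            rw [← sq, ← Complex.normSq_eq_norm_sq, Complex.normSq_apply]; ring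
        _ = ρ ^ 2 := by rw [habs, hρ]; ring
    have hfac : ‖q ^ n * c - q ^ m * d‖ = ‖q‖ ^ m * ‖q ^ s * c - d‖ := by
      have h4 : q ^ n * c - q ^ m * d = q ^ m * (q ^ s * c - d) := by
        rw [mul_sub, ← mul_assoc, ← pow_add, hms]
      rw [h4, norm_mul, norm_pow]
    have hnc : ‖q ^ s * c‖ = ρ * ‖c‖ := by rw [norm_mul, norm_pow]
    have hexp : ‖q ^ s * c - d‖ ^ 2 = ρ ^ 2 * ‖c‖ ^ 2 + ‖d‖ ^ 2 - 2 * (X * A + Y * B) := by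
      rw [norm_sub_sq_real, hnc, hqs, inner_slice_mul, ← hA, ← hB]; ring
    have hCS : (X * A + Y * B) ^ 2 ≤ (X ^ 2 + Y ^ 2) * (A ^ 2 + B ^ 2) := by
      nlinarith [sq_nonneg (X * B - Y * A)]
    have ht : -(X * A + Y * B) ≤ ρ * W := by
      have h1 : |X * A + Y * B| ≤ ρ * W := by
        have h2 : (X * A + Y * B) ^ 2 ≤ (ρ * W) ^ 2 := by
          calc (X * A + Y * B) ^ 2 ≤ (X ^ 2 + Y ^ 2) * (A ^ 2 + B ^ 2) := hCS
            _ = (ρ * W) ^ 2 := by rw [hXY, ← hW2]; ring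
        calc |X * A + Y * B| = Real.sqrt ((X * A + Y * B) ^ 2) := (Real.sqrt_sq_eq_abs _).symm
          _ ≤ Real.sqrt ((ρ * W) ^ 2) := Real.sqrt_le_sqrt h2
          _ = ρ * W := Real.sqrt_sq (by positivity)
      linarith [neg_abs_le (X * A + Y * B)]
    have hSlow : ‖c‖ ^ 2 + ‖d‖ ^ 2 + 2 * W ≤ S ^ 2 := by
      obtain ⟨u, hu⟩ : ∃ u : {q : Quaternion ℝ // ‖q‖ = 1},
          ‖(u : Quaternion ℝ) ^ n * c - (u : Quaternion ℝ) ^ m * d‖ ^ 2 =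
            ‖c‖ ^ 2 + ‖d‖ ^ 2 + 2 * W := by
        by_cases hw : (Complex.mk (-A) (-B)) = 0
        · have hA0 : A = 0 := by have := congrArg Complex.re hw; simpa using this
          have hB0 : B = 0 := by have := congrArg Complex.im hw; simpa using this
          have hWz : W = 0 := by rw [hWdef, hA0, hB0]; simp
          refine ⟨⟨1, norm_one⟩, ?_⟩
          have h2 : ((⟨1, norm_one⟩ : {q : Quaternion ℝ // ‖q‖ = 1}) : Quaternion ℝ) ^ n * c -
              ((⟨1, norm_one⟩ : {q : Quaternion ℝ // ‖q‖ = 1}) : Quaternion ℝ) ^ m * d = c - d := by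
            simp
          rw [h2, norm_sub_sq_real, hWz, ← hA, hA0]; ring
        · set w : ℂ := Complex.mk (-A) (-B) with hwdef
          have hwabs : ‖w‖ = W := by
            rw [Complex.norm_def, Complex.normSq_apply, hWdef]
            norm_num
            congr 1
            ring
          have hWpos : 0 < W := by rw [← hwabs]; exact norm_pos_iff.mpr hw
          set θ := w.arg / s with hθ
          set zu := Complex.exp (θ * Complex.I) with hzu
          have hzuabs : ‖zu‖ = 1 := by
            rw [hzu, Complex.norm_exp_ofReal_mul_I]
          have hsne : (s : ℂ) ≠ 0 := Nat.cast_ne_zero.mpr (by omega)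
          have hzus : zu ^ s = Complex.exp (w.arg * Complex.I) := by
            rw [hzu, ← Complex.exp_nat_mul]
            congr 1
            rw [hθ]
            push_cast
            field_simp
          have hre' : (zu ^ s).re = -A / W := by
            rw [hzus, Complex.exp_ofReal_mul_I_re, Complex.cos_arg hw, hwabs]
          have him' : (zu ^ s).im = -B / W := by
            rw [hzus, Complex.exp_ofReal_mul_I_im, Complex.sin_arg, hwabs]
          have hunorm : ‖phi I zu‖ = 1 := by rw [phi_norm I hIre hInorm, hzuabs]
          refine ⟨⟨phi I zu, hunorm⟩, ?_⟩
          set u : Quaternion ℝ := phi I zu with hudef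
          have hus : u ^ s = ((-A / W : ℝ) : Quaternion ℝ) + (-B / W) • I := by
            rw [hudef, ← phi_pow I hIre hII, phi, hre', him']
          have husnorm : ‖u ^ s * c‖ = ‖c‖ := by
            rw [norm_mul, hudef, ← phi_pow I hIre hII, phi_norm I hIre hInorm, norm_pow, hzuabs,
              one_pow, one_mul]
          have hfac2 : u ^ n * c - u ^ m * d = u ^ m * (u ^ s * c - d) := by
            rw [mul_sub, ← mul_assoc, ← pow_add, hms]
          have hnn : ‖u ^ n * c - u ^ m * d‖ = ‖u ^ s * c - d‖ := by
            rw [hfac2, norm_mul, norm_pow, hunorm, one_pow, one_mul]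
          show ‖u ^ n * c - u ^ m * d‖ ^ 2 = ‖c‖ ^ 2 + ‖d‖ ^ 2 + 2 * W
          rw [hnn, norm_sub_sq_real, husnorm, hus, inner_slice_mul, ← hA, ← hB]
          have hW' : -A / W * A + -B / W * B = -W := by
            field_simp
            linear_combination hW2
          rw [hW']; ring
      calc ‖c‖ ^ 2 + ‖d‖ ^ 2 + 2 * W
          = ‖(u : Quaternion ℝ) ^ n * c - (u : Quaternion ℝ) ^ m * d‖ ^ 2 := hu.symm
        _ ≤ S ^ 2 := pow_le_pow_left₀ (norm_nonneg _) (hS_ge u) 2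
    have hmain : ‖q ^ n * c - q ^ m * d‖ ^ 2 ≤ (‖q‖ ^ n * S) ^ 2 := by
      have h1 : ‖q ^ n * c - q ^ m * d‖ ^ 2 =
          (‖q‖ ^ m) ^ 2 * (ρ ^ 2 * ‖c‖ ^ 2 + ‖d‖ ^ 2 - 2 * (X * A + Y * B)) := by
        rw [hfac, mul_pow, hexp]
      have h2 : ρ ^ 2 * ‖c‖ ^ 2 + ‖d‖ ^ 2 - 2 * (X * A + Y * B) ≤
          ρ ^ 2 * (‖c‖ ^ 2 + ‖d‖ ^ 2 + 2 * W) := by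
        have hρ0 : (0 : ℝ) ≤ ρ := le_trans zero_le_one hρ1
        have hρsq : 1 ≤ ρ ^ 2 := one_le_pow₀ hρ1
        have e2 : ‖d‖ ^ 2 ≤ ρ ^ 2 * ‖d‖ ^ 2 := le_mul_of_one_le_left (sq_nonneg _) hρsq
        have e1 : ρ * W ≤ ρ ^ 2 * W := mul_le_mul_of_nonneg_right (by nlinarith) hW0
        nlinarith [ht, e1, e2]
      have h3 : (‖q‖ ^ n) ^ 2 = (‖q‖ ^ m) ^ 2 * ρ ^ 2 := by
        rw [hρ, ← mul_pow, ← pow_add, hms]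
      have h4 : (0 : ℝ) ≤ (‖q‖ ^ m) ^ 2 := sq_nonneg _
      calc ‖q ^ n * c - q ^ m * d‖ ^ 2
          = (‖q‖ ^ m) ^ 2 * (ρ ^ 2 * ‖c‖ ^ 2 + ‖d‖ ^ 2 - 2 * (X * A + Y * B)) := h1
        _ ≤ (‖q‖ ^ m) ^ 2 * (ρ ^ 2 * (‖c‖ ^ 2 + ‖d‖ ^ 2 + 2 * W)) :=
            mul_le_mul_of_nonneg_left h2 h4
        _ ≤ (‖q‖ ^ m) ^ 2 * (ρ ^ 2 * S ^ 2) :=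
            mul_le_mul_of_nonneg_left (mul_le_mul_of_nonneg_left hSlow (sq_nonneg ρ)) h4
        _ = (‖q‖ ^ n * S) ^ 2 := by rw [mul_pow, h3]; ring
    exact le_of_pow_le_pow_left₀ two_ne_zero (by positivity) hmain

lemma unit_norm_bound (c d : Quaternion ℝ) (n m : ℕ) (u : {q : Quaternion ℝ // ‖q‖ = 1}) :
    ‖(u : Quaternion ℝ) ^ n * c - (u : Quaternion ℝ) ^ m * d‖ ≤ ‖c‖ + ‖d‖ := by
  calc ‖(u : Quaternion ℝ) ^ n * c - (u : Quaternion ℝ) ^ m * d‖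
      ≤ ‖(u : Quaternion ℝ) ^ n * c‖ + ‖(u : Quaternion ℝ) ^ m * d‖ := norm_sub_le _ _
    _ = ‖c‖ + ‖d‖ := by rw [norm_mul, norm_mul, norm_pow, norm_pow, u.2, one_pow, one_pow,
          one_mul, one_mul]

lemma bdd_ratio (c d : Quaternion ℝ) (n m : ℕ) (t : ℝ) (ht : 0 < t) :
    BddAbove (Set.range fun u : {q : Quaternion ℝ // ‖q‖ = 1} =>
      ‖(u : Quaternion ℝ) ^ n * c - (u : Quaternion ℝ) ^ m * d‖ / t) := by
  refine ⟨(‖c‖ + ‖d‖) / t, ?_⟩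
  rintro x ⟨u, rfl⟩
  have h := unit_norm_bound c d n m u
  exact (div_le_div_iff_of_pos_right ht).mpr h

lemma normJK (x : Quaternion ℝ) (hj : x.imJ = 0) (hk : x.imK = 0) :
    ‖x‖ ≤ |x.re| + |x.imI| := by
  have h1 : ‖x‖ * ‖x‖ = x.re ^ 2 + x.imI ^ 2 := by
    rw [← Quaternion.normSq_eq_norm_mul_self, Quaternion.normSq_def', hj, hk]; ring
  nlinarith [norm_nonneg x, abs_nonneg x.re, abs_nonneg x.imI, sq_abs x.re, sq_abs x.imI,
    mul_nonneg (abs_nonneg x.re) (abs_nonneg x.imI)]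

/-- Quaternionic Eneström–Kakeya-type theorem for lacunary polynomials whose
coefficients `a l = α_l + β_l i` have only real and `i`-parts, with `α` monotone
increasing and `β` monotone decreasing. -/
theorem stmt_2 (k : ℕ) (N : ℕ → ℕ) (a : ℕ → Quaternion ℝ)
    (hN0 : N 0 = 0) (hNmono : ∀ l, l < k → N l < N (l + 1))
    (hJ : ∀ l, l ≤ k → (a l).imJ = 0) (hK : ∀ l, l ≤ k → (a l).imK = 0)
    (hak : a k ≠ 0)
    (hadj : ∀ l, l < k → a l ≠ a (l + 1))
    (hα : ∀ l, l < k → (a l).re ≤ (a (l + 1)).re)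
    (hβ : ∀ l, l < k → (a (l + 1)).imI ≤ (a l).imI)
    (Mj : ℕ → ℝ)
    (hMj : ∀ j, 1 ≤ j → j ≤ k →
      Mj j = ⨆ q : {q : Quaternion ℝ // ‖q‖ = 1},
        ‖(q : Quaternion ℝ) ^ (N j) * a j -
          (q : Quaternion ℝ) ^ (N (j - 1) + 1) * a (j - 1)‖ / ‖a j - a (j - 1)‖)
    (M : ℝ) (hM : M = ⨆ j ∈ Finset.Icc 1 k, Mj j)
    (q : Quaternion ℝ) (hq : ∑ l ∈ Finset.range (k + 1), q ^ (N l) * a l = 0) :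
    ‖q‖ ≤ (M / ‖a k‖) * (((a k).re - (a 0).re + |(a 0).re|) +
      ((a 0).imI - (a k).imI + |(a 0).imI|)) := by
  classical
  haveI : Nonempty {q : Quaternion ℝ // ‖q‖ = 1} := ⟨⟨1, norm_one⟩⟩
  have hak0 : 0 < ‖a k‖ := norm_pos_iff.mpr hak
  have hk1 : 1 ≤ k := by
    by_contra h
    have hk0 : k = 0 := by omega
    subst hk0
    rw [Finset.sum_range_one, hN0, pow_zero, one_mul] at hq
    exact hak hq
  -- monotone chains
  have hNle : ∀ i j, i ≤ j → j ≤ k → N i ≤ N j := by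
    intro i j hij hjk
    induction j with
    | zero => have h0 : i = 0 := by omega
              subst h0; exact le_rfl
    | succ j ih =>
      rcases Nat.eq_or_lt_of_le hij with rfl | h
      · exact le_rfl
      · exact le_trans (ih (by omega) (by omega)) (le_of_lt (hNmono j (by omega)))
  have hαle : ∀ i j, i ≤ j → j ≤ k → (a i).re ≤ (a j).re := by
    intro i j hij hjk
    induction j with
    | zero => have h0 : i = 0 := by omega
              subst h0; exact le_rfl
    | succ j ih =>
      rcases Nat.eq_or_lt_of_le hij with rfl | h
      · exact le_rfl
      · exact le_trans (ih (by omega) (by omega)) (hα j (by omega))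
  have hβle : ∀ i j, i ≤ j → j ≤ k → (a j).imI ≤ (a i).imI := by
    intro i j hij hjk
    induction j with
    | zero => have h0 : i = 0 := by omega
              subst h0; exact le_rfl
    | succ j ih =>
      rcases Nat.eq_or_lt_of_le hij with rfl | h
      · exact le_rfl
      · exact le_trans (hβ j (by omega)) (ih (by omega) (by omega))
  set E : ℝ := ((a k).re - (a 0).re + |(a 0).re|) + ((a 0).imI - (a k).imI + |(a 0).imI|) with hE
  -- M bounds each Mj
  have hg : ∀ j, j ∉ Finset.Icc 1 k → (⨆ (_ : j ∈ Finset.Icc 1 k), Mj j) = 0 := by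
    intro j hj
    haveI : IsEmpty (j ∈ Finset.Icc 1 k) := ⟨hj⟩
    have he : (Set.range fun _ : j ∈ Finset.Icc 1 k => Mj j) = ∅ := Set.range_eq_empty _
    rw [iSup, he, Real.sSup_empty]
  have hMbdd : BddAbove (Set.range fun j => ⨆ (_ : j ∈ Finset.Icc 1 k), Mj j) := by
    have hsub : (Set.range fun j => ⨆ (_ : j ∈ Finset.Icc 1 k), Mj j) ⊆
        insert (0 : ℝ) ((fun j => ⨆ (_ : j ∈ Finset.Icc 1 k), Mj j) '' (Set.Icc 1 k)) := by
      rintro x ⟨j, rfl⟩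
      by_cases hj : j ∈ Finset.Icc 1 k
      · exact Set.mem_insert_of_mem _ ⟨j, by simpa using hj, rfl⟩
      · exact (hg j hj) ▸ Set.mem_insert _ _
    exact BddAbove.mono hsub (Set.Finite.bddAbove (((Set.finite_Icc 1 k).image _).insert 0))
  have hM_ge : ∀ j, j ∈ Finset.Icc 1 k → Mj j ≤ M := by
    intro j hj
    rw [hM]
    have hgj : (⨆ (_ : j ∈ Finset.Icc 1 k), Mj j) = Mj j := ciSup_pos hj
    calc Mj j = ⨆ (_ : j ∈ Finset.Icc 1 k), Mj j := hgj.symm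
      _ ≤ ⨆ j, ⨆ (_ : j ∈ Finset.Icc 1 k), Mj j := le_ciSup hMbdd j
  -- each Mj (for 1 ≤ j ≤ k) is at least 1
  have hMj_ge1 : ∀ j, 1 ≤ j → j ≤ k → 1 ≤ Mj j := by
    intro j h1 h2
    have hne : a (j - 1) ≠ a j := by
      have h := hadj (j - 1) (by omega)
      rwa [Nat.sub_add_cancel h1] at h
    have hΔ : (0 : ℝ) < ‖a j - a (j - 1)‖ :=
      norm_pos_iff.mpr (sub_ne_zero.mpr (Ne.symm hne))
    rw [hMj j h1 h2]
    have hle := le_ciSup (bdd_ratio (a j) (a (j - 1)) (N j) (N (j - 1) + 1) _ hΔ)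
      (⟨1, norm_one⟩ : {q : Quaternion ℝ // ‖q‖ = 1})
    calc (1 : ℝ) = ‖(1 : Quaternion ℝ) ^ (N j) * a j - (1 : Quaternion ℝ) ^ (N (j - 1) + 1) *
          a (j - 1)‖ / ‖a j - a (j - 1)‖ := by
          rw [one_pow, one_pow, one_mul, one_mul, div_self hΔ.ne']
      _ ≤ _ := hle
  have hM1 : 1 ≤ M := le_trans (hMj_ge1 k hk1 le_rfl) (hM_ge k (by simp [hk1]))
  have hM0 : 0 ≤ M := le_trans zero_le_one hM1
  have hEak : ‖a k‖ ≤ E := by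
    have h1 : ‖a k‖ ≤ |(a k).re| + |(a k).imI| := normJK _ (hJ k le_rfl) (hK k le_rfl)
    have h2 : (a 0).re ≤ (a k).re := hαle 0 k (by omega) le_rfl
    have h3 : (a k).imI ≤ (a 0).imI := hβle 0 k (by omega) le_rfl
    have h4 : |(a k).re| ≤ (a k).re - (a 0).re + |(a 0).re| := by
      rcases abs_cases (a k).re with ⟨hh, _⟩ | ⟨hh, _⟩ <;>
        rcases abs_cases (a 0).re with ⟨hh', _⟩ | ⟨hh', _⟩ <;> linarith
    have h5 : |(a k).imI| ≤ (a 0).imI - (a k).imI + |(a 0).imI| := by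
      rcases abs_cases (a k).imI with ⟨hh, _⟩ | ⟨hh, _⟩ <;>
        rcases abs_cases (a 0).imI with ⟨hh', _⟩ | ⟨hh', _⟩ <;> linarith
    rw [hE]; linarith
  rcases le_or_gt ‖q‖ 1 with hr | hr
  · -- small |q|
    have : (1 : ℝ) ≤ (M / ‖a k‖) * E := by
      rw [div_mul_eq_mul_div, le_div_iff₀ hak0, one_mul]
      nlinarith
    linarith
  · -- |q| > 1
    have hr1 : 1 ≤ ‖q‖ := hr.le
    have hr0 : (0 : ℝ) < ‖q‖ := lt_trans one_pos hr
    -- telescoping identity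
    have hsum1 : ∑ l ∈ Finset.range k, q ^ (N (l + 1)) * a (l + 1) = -(a 0) := by
      have h := Finset.sum_range_succ' (fun l => q ^ (N l) * a l) k
      rw [hq, hN0, pow_zero, one_mul] at h
      exact eq_neg_of_add_eq_zero_left h.symm
    have hsum2 : ∑ l ∈ Finset.range k, q ^ (N l + 1) * a l = -(q ^ (N k + 1) * a k) := by
      have h := Finset.sum_range_succ (fun l => q ^ (N l) * a l) k
      rw [hq] at h
      have h2 : ∑ l ∈ Finset.range k, q ^ (N l) * a l = -(q ^ (N k) * a k) := by
        exact eq_neg_of_add_eq_zero_left h.symm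
      calc ∑ l ∈ Finset.range k, q ^ (N l + 1) * a l
          = ∑ l ∈ Finset.range k, q * (q ^ (N l) * a l) := by
            refine Finset.sum_congr rfl fun l _ => ?_
            rw [pow_succ', mul_assoc]
        _ = q * ∑ l ∈ Finset.range k, q ^ (N l) * a l := by rw [Finset.mul_sum]
        _ = q * -(q ^ (N k) * a k) := by rw [h2]
        _ = -(q ^ (N k + 1) * a k) := by
            rw [mul_neg, pow_succ', mul_assoc]
    have hiden : q ^ (N k + 1) * a k =
        a 0 + ∑ l ∈ Finset.range k, (q ^ (N (l + 1)) * a (l + 1) - q ^ (N l + 1) * a l) := by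
      rw [Finset.sum_sub_distrib, hsum1, hsum2]
      abel
    -- term bounds
    have hterm : ∀ l ∈ Finset.range k,
        ‖q ^ (N (l + 1)) * a (l + 1) - q ^ (N l + 1) * a l‖ ≤
          ‖q‖ ^ (N k) * (M * (((a (l + 1)).re - (a l).re) + ((a l).imI - (a (l + 1)).imI))) := by
      intro l hl
      rw [Finset.mem_range] at hl
      have hne : a l ≠ a (l + 1) := hadj l hl
      have hΔ : (0 : ℝ) < ‖a (l + 1) - a l‖ := norm_pos_iff.mpr (sub_ne_zero.mpr (Ne.symm hne))
      have hmn : N l + 1 ≤ N (l + 1) := hNmono l hl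
      have hkey := key (a (l + 1)) (a l) (N (l + 1)) (N l + 1) hmn q hr1
      set S := ⨆ u : {q : Quaternion ℝ // ‖q‖ = 1},
        ‖(u : Quaternion ℝ) ^ (N (l + 1)) * a (l + 1) - (u : Quaternion ℝ) ^ (N l + 1) * a l‖
        with hS
      have hS_le : S ≤ Mj (l + 1) * ‖a (l + 1) - a l‖ := by
        refine ciSup_le fun u => ?_
        have h1 : ‖(u : Quaternion ℝ) ^ (N (l + 1)) * a (l + 1) -
            (u : Quaternion ℝ) ^ (N l + 1) * a l‖ / ‖a (l + 1) - a l‖ ≤ Mj (l + 1) := by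
          rw [hMj (l + 1) (by omega) (by omega)]
          simp only [Nat.add_sub_cancel]
          exact le_ciSup (bdd_ratio (a (l + 1)) (a l) (N (l + 1)) (N l + 1) _ hΔ) u
        calc ‖(u : Quaternion ℝ) ^ (N (l + 1)) * a (l + 1) -
              (u : Quaternion ℝ) ^ (N l + 1) * a l‖
            = ‖(u : Quaternion ℝ) ^ (N (l + 1)) * a (l + 1) -
              (u : Quaternion ℝ) ^ (N l + 1) * a l‖ / ‖a (l + 1) - a l‖ * ‖a (l + 1) - a l‖ := by
              field_simp
          _ ≤ Mj (l + 1) * ‖a (l + 1) - a l‖ := mul_le_mul_of_nonneg_right h1 (norm_nonneg _)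
      have hMjle : Mj (l + 1) ≤ M := hM_ge (l + 1) (by simp; omega)
      have hMj0 : 0 ≤ Mj (l + 1) := le_trans zero_le_one (hMj_ge1 (l + 1) (by omega) (by omega))
      have hΔJ : (a (l + 1) - a l).imJ = 0 := by
        have := hJ (l + 1) (by omega); have := hJ l (by omega)
        simp [Quaternion.imJ_sub, *]
      have hΔK : (a (l + 1) - a l).imK = 0 := by
        have := hK (l + 1) (by omega); have := hK l (by omega)
        simp [Quaternion.imK_sub, *]
      have hΔle : ‖a (l + 1) - a l‖ ≤ ((a (l + 1)).re - (a l).re) + ((a l).imI - (a (l + 1)).imI) := by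
        have h1 := normJK _ hΔJ hΔK
        have h2 : (a (l + 1) - a l).re = (a (l + 1)).re - (a l).re := by
          simp [Quaternion.re_sub]
        have h3 : (a (l + 1) - a l).imI = (a (l + 1)).imI - (a l).imI := by
          simp [Quaternion.imI_sub]
        rw [h2, h3] at h1
        have h4 : |(a (l + 1)).re - (a l).re| = (a (l + 1)).re - (a l).re :=
          abs_of_nonneg (by linarith [hα l hl])
        have h5 : |(a (l + 1)).imI - (a l).imI| = (a l).imI - (a (l + 1)).imI := by
          rw [abs_of_nonpos (by linarith [hβ l hl])]; ring
        rw [h4, h5] at h1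
        exact h1
      have hpow : ‖q‖ ^ (N (l + 1)) ≤ ‖q‖ ^ (N k) :=
        pow_le_pow_right₀ hr1 (hNle (l + 1) k (by omega) le_rfl)
      calc ‖q ^ (N (l + 1)) * a (l + 1) - q ^ (N l + 1) * a l‖
          ≤ ‖q‖ ^ (N (l + 1)) * S := hkey
        _ ≤ ‖q‖ ^ (N (l + 1)) * (Mj (l + 1) * ‖a (l + 1) - a l‖) :=
            mul_le_mul_of_nonneg_left hS_le (by positivity)
        _ ≤ ‖q‖ ^ (N k) * (M * (((a (l + 1)).re - (a l).re) + ((a l).imI - (a (l + 1)).imI))) := by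
            refine mul_le_mul hpow ?_ (by positivity) (by positivity)
            exact mul_le_mul hMjle hΔle (norm_nonneg _) hM0
    -- sum it all
    have hsumD : ∑ l ∈ Finset.range k,
        (((a (l + 1)).re - (a l).re) + ((a l).imI - (a (l + 1)).imI)) =
        ((a k).re - (a 0).re) + ((a 0).imI - (a k).imI) := by
      rw [Finset.sum_add_distrib, Finset.sum_range_sub (fun l => (a l).re),
        Finset.sum_range_sub' (fun l => (a l).imI)]
    have hnormsum : ‖q‖ ^ (N k + 1) * ‖a k‖ ≤
        ‖a 0‖ + ∑ l ∈ Finset.range k, ‖q ^ (N (l + 1)) * a (l + 1) - q ^ (N l + 1) * a l‖ := by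
      have h1 : ‖q ^ (N k + 1) * a k‖ = ‖q‖ ^ (N k + 1) * ‖a k‖ := by rw [norm_mul, norm_pow]
      rw [← h1, hiden]
      exact le_trans (norm_add_le _ _) (by gcongr; exact norm_sum_le _ _)
    have ha0 : ‖a 0‖ ≤ ‖q‖ ^ (N k) * (M * (|(a 0).re| + |(a 0).imI|)) := by
      have h1 : ‖a 0‖ ≤ |(a 0).re| + |(a 0).imI| := normJK _ (hJ 0 (by omega)) (hK 0 (by omega))
      have h2 : (1 : ℝ) ≤ ‖q‖ ^ (N k) := one_le_pow₀ hr1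
      have h4 : (1 : ℝ) ≤ ‖q‖ ^ (N k) * M := by nlinarith
      calc ‖a 0‖ ≤ |(a 0).re| + |(a 0).imI| := h1
        _ = 1 * (|(a 0).re| + |(a 0).imI|) := (one_mul _).symm
        _ ≤ (‖q‖ ^ (N k) * M) * (|(a 0).re| + |(a 0).imI|) :=
            mul_le_mul_of_nonneg_right h4 (by positivity)
        _ = ‖q‖ ^ (N k) * (M * (|(a 0).re| + |(a 0).imI|)) := by ring
    have hfin : ‖q‖ ^ (N k) * (‖q‖ * ‖a k‖) ≤ ‖q‖ ^ (N k) * (M * E) := by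
      have h1 : ‖q‖ ^ (N k) * (‖q‖ * ‖a k‖) = ‖q‖ ^ (N k + 1) * ‖a k‖ := by
        rw [pow_succ]; ring
      have h2 : ∑ l ∈ Finset.range k, ‖q ^ (N (l + 1)) * a (l + 1) - q ^ (N l + 1) * a l‖ ≤
          ‖q‖ ^ (N k) * (M * (((a k).re - (a 0).re) + ((a 0).imI - (a k).imI))) := by
        calc ∑ l ∈ Finset.range k, ‖q ^ (N (l + 1)) * a (l + 1) - q ^ (N l + 1) * a l‖
            ≤ ∑ l ∈ Finset.range k, ‖q‖ ^ (N k) *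
              (M * (((a (l + 1)).re - (a l).re) + ((a l).imI - (a (l + 1)).imI))) :=
              Finset.sum_le_sum hterm
          _ = ‖q‖ ^ (N k) * (M * (((a k).re - (a 0).re) + ((a 0).imI - (a k).imI))) := by
              rw [← Finset.mul_sum, ← Finset.mul_sum, hsumD]
      rw [h1]
      calc ‖q‖ ^ (N k + 1) * ‖a k‖
          ≤ ‖a 0‖ + ∑ l ∈ Finset.range k, ‖q ^ (N (l + 1)) * a (l + 1) - q ^ (N l + 1) * a l‖ :=
            hnormsum
        _ ≤ ‖q‖ ^ (N k) * (M * (|(a 0).re| + |(a 0).imI|)) +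
            ‖q‖ ^ (N k) * (M * (((a k).re - (a 0).re) + ((a 0).imI - (a k).imI))) :=
            add_le_add ha0 h2
        _ = ‖q‖ ^ (N k) * (M * E) := by rw [hE]; ring
    have h6 : ‖q‖ * ‖a k‖ ≤ M * E :=
      le_of_mul_le_mul_left hfin (pow_pos hr0 _)
    rw [div_mul_eq_mul_div, le_div_iff₀ hak0]
    exact h6
end

section
/- Let p(q) = Σ_{j=0}^{k} q^{n_j} a_{n_j} be a lacunary quaternionic polynomial with exponents 0 = n_0 < n_1 < ⋯ < n_k = n and real coefficients a_{n_j} ∈ ℝ with a_{n_k} ≠ 0, satisfying a_{n_0} ≤ a_{n_1} ≤ ⋯ ≤ a_{n_k} and with no two adjacent coefficients equal (a_{n_j} ≠ a_{n_{j+1}} for j = 0, …, k−1). For j = 1, …, k set M_{n_j} := sup_{|q|=1} ‖q^{n_j} a_{n_j} − q^{n_{j−1}+1} a_{n_{j−1}}‖ / |a_{n_j} − a_{n_{j−1}}| and M := max_{1 ≤ j ≤ k} M_{n_j}. Then every zero q ∈ ℍ of p satisfies |q| ≤ (M / |a_{n_k}|) (a_{n_k} − a_{n_0} + |a_{n_0}|).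 -/
open Real Finset

section AuxEK
open Quaternion

lemma normQC (z : ℂ) : ‖(z : ℍ)‖ = ‖z‖ := by
  have h : Complex.normSq z = ‖(z:ℍ)‖ * ‖(z:ℍ)‖ := by
    rw [← Quaternion.normSq_eq_norm_mul_self, Quaternion.normSq_def', Complex.normSq_apply]
    simp [pow_two]
  rw [Complex.norm_def, h, Real.sqrt_mul_self (norm_nonneg _)]

lemma coeC_pow (z : ℂ) (n : ℕ) : ((z : ℍ)) ^ n = ((z ^ n : ℂ) : ℍ) :=
  (map_pow Quaternion.ofComplex z n).symm

lemma exI (d : ℕ) (hd : 0 < d) : ∃ w : Quaternion ℝ, ‖w‖ = 1 ∧ w ^ d = (Complex.I : ℍ) := by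
  refine ⟨((Complex.exp ((Real.pi / (2 * d) : ℝ) * Complex.I)) : ℍ), ?_, ?_⟩
  · rw [normQC, Complex.norm_exp_ofReal_mul_I]
  · rw [coeC_pow]
    have : Complex.exp ((Real.pi / (2 * d) : ℝ) * Complex.I) ^ d
        = Complex.exp (Real.pi / 2 * Complex.I) := by
      rw [← Complex.exp_nat_mul]
      congr 1
      have hd' : (d : ℂ) ≠ 0 := Nat.cast_ne_zero.mpr hd.ne'
      push_cast
      field_simp
    rw [this]
    norm_num [Complex.exp_mul_I]

lemma normTerm (w : Quaternion ℝ) (hw : ‖w‖ = 1) (n m : ℕ) (a b : ℝ) :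
    ‖w ^ n * (a : Quaternion ℝ) - w ^ m * (b : Quaternion ℝ)‖ ≤ |a| + |b| := by
  calc ‖w ^ n * (a : Quaternion ℝ) - w ^ m * (b : Quaternion ℝ)‖
      ≤ ‖w ^ n * (a : Quaternion ℝ)‖ + ‖w ^ m * (b : Quaternion ℝ)‖ := norm_sub_le _ _
    _ = |a| + |b| := by
        rw [norm_mul, norm_mul, norm_pow, norm_pow, hw, Quaternion.norm_coe,
          Quaternion.norm_coe, one_pow, one_pow, one_mul, one_mul, Real.norm_eq_abs,
          Real.norm_eq_abs]

lemma bddF (n m : ℕ) (a b : ℝ) :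
    BddAbove (Set.range fun w : {w : Quaternion ℝ // ‖w‖ = 1} =>
      ‖(w : Quaternion ℝ) ^ n * (a : Quaternion ℝ) -
        (w : Quaternion ℝ) ^ m * (b : Quaternion ℝ)‖ / |a - b|) := by
  refine ⟨(|a| + |b|) / |a - b|, ?_⟩
  rintro x ⟨w, rfl⟩
  exact div_le_div_of_nonneg_right (normTerm w w.2 n m a b) (abs_nonneg _)

lemma claimA (n m : ℕ) (a b : ℝ) (hab : b < a) (S : ℝ)
    (hS : S = ⨆ w : {w : Quaternion ℝ // ‖w‖ = 1},
      ‖(w : Quaternion ℝ) ^ n * (a : Quaternion ℝ) -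
        (w : Quaternion ℝ) ^ m * (b : Quaternion ℝ)‖ / |a - b|)
    (w : Quaternion ℝ) (hw : ‖w‖ = 1) :
    ‖w ^ n * (a : Quaternion ℝ) - w ^ m * (b : Quaternion ℝ)‖ ≤ S * (a - b) := by
  have hpos : (0:ℝ) < |a - b| := abs_pos.mpr (sub_ne_zero.mpr hab.ne')
  have h1 : ‖w ^ n * (a : Quaternion ℝ) - w ^ m * (b : Quaternion ℝ)‖ / |a - b| ≤ S := by
    rw [hS]
    exact le_ciSup (bddF n m a b) ⟨w, hw⟩
  have := (div_le_iff₀ hpos).mp h1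
  rwa [abs_of_pos (sub_pos.mpr hab)] at this

lemma key_s4 (n m : ℕ) (hm : 1 ≤ m) (hmn : m ≤ n) (a b : ℝ) (hab : b < a) (S : ℝ)
    (hS : S = ⨆ w : {w : Quaternion ℝ // ‖w‖ = 1},
      ‖(w : Quaternion ℝ) ^ n * (a : Quaternion ℝ) -
        (w : Quaternion ℝ) ^ m * (b : Quaternion ℝ)‖ / |a - b|)
    (q : Quaternion ℝ) (hq1 : 1 ≤ ‖q‖) :
    ‖q ^ n * (a : Quaternion ℝ) - q ^ m * (b : Quaternion ℝ)‖ ≤ ‖q‖ ^ n * (S * (a - b)) := by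
  set r : ℝ := ‖q‖ with hr
  have hr0 : (0:ℝ) < r := lt_of_lt_of_le one_pos hq1
  obtain ⟨u, hun, hqu⟩ : ∃ u : Quaternion ℝ, ‖u‖ = 1 ∧ q = r • u :=
    ⟨r⁻¹ • q,
      by rw [norm_smul, norm_inv, Real.norm_eq_abs, abs_of_pos hr0, ← hr, inv_mul_cancel₀ hr0.ne'],
      by rw [smul_smul, mul_inv_cancel₀ hr0.ne', one_smul]⟩
  have hrn : (0:ℝ) < r ^ n := pow_pos hr0 n
  set t : ℝ := r ^ m / r ^ n with ht
  have ht0 : 0 < t := div_pos (pow_pos hr0 m) hrn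
  have ht1 : t ≤ 1 := by
    rw [ht, div_le_one hrn]
    exact pow_le_pow_right₀ hq1 hmn
  -- decompose
  have hqn : q ^ n * (a : Quaternion ℝ) - q ^ m * (b : Quaternion ℝ)
      = (r ^ n) • ((1 - t) • ((u:Quaternion ℝ) ^ n * (a : Quaternion ℝ))
        + t • (u ^ n * (a : Quaternion ℝ) - u ^ m * (b : Quaternion ℝ))) := by
    have hrm : r ^ m = r ^ n * t := by
      rw [ht]; field_simp
    have e1 : q ^ n = (r ^ n) • u ^ n := by rw [hqu, smul_pow]
    have e2 : q ^ m = (r ^ n * t) • u ^ m := by rw [hqu, smul_pow, ← hrm]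
    rw [e1, e2, smul_mul_assoc, smul_mul_assoc]
    module
  have hDa : ‖(u:Quaternion ℝ) ^ n * (a : Quaternion ℝ)‖ = |a| := by
    rw [norm_mul, norm_pow, hun, one_pow, one_mul, Quaternion.norm_coe, Real.norm_eq_abs]
  have hD : ‖u ^ n * (a : Quaternion ℝ) - u ^ m * (b : Quaternion ℝ)‖ ≤ S * (a - b) :=
    claimA n m a b hab S hS u hun
  have haS : (1:ℝ) ≤ t ∨ |a| ≤ S * (a - b) := by
    rcases eq_or_lt_of_le ht1 with h | h
    · exact Or.inl h.ge
    · right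
      have hlt : r ^ m < r ^ n := (div_lt_one hrn).mp h
      have hmn' : m < n := by
        by_contra hc
        exact absurd (pow_le_pow_right₀ hq1 (not_lt.mp hc)) (not_le.mpr hlt)
      obtain ⟨w, hw, hwd⟩ := exI (n - m) (Nat.sub_pos_of_lt hmn')
      have hwnm : w ^ n = w ^ m * w ^ (n - m) := by
        rw [← pow_add, Nat.add_sub_cancel' hmn]
      have hval : ‖w ^ n * (a : Quaternion ℝ) - w ^ m * (b : Quaternion ℝ)‖
          = ‖(Complex.I * (a:ℂ) - (b:ℂ) : ℂ)‖ := by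
        have : w ^ n * (a : Quaternion ℝ) - w ^ m * (b : Quaternion ℝ)
            = w ^ m * ((Complex.I : ℍ) * (a : Quaternion ℝ) - (b : Quaternion ℝ)) := by
          rw [hwnm, hwd, mul_sub, mul_assoc]
        rw [this, norm_mul, norm_pow, hw, one_pow, one_mul]
        have : (Complex.I : ℍ) * ((a:ℝ) : Quaternion ℝ) - ((b:ℝ) : Quaternion ℝ)
            = ((Complex.I * (a:ℂ) - (b:ℂ) : ℂ) : ℍ) := by
          push_cast [← Quaternion.coeComplex_coe, ← Quaternion.coeComplex_mul]
          exact (map_sub Quaternion.ofComplex _ _).symm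
        rw [this, normQC]
      have h1 : |a| ≤ ‖w ^ n * (a : Quaternion ℝ) - w ^ m * (b : Quaternion ℝ)‖ := by
        rw [hval]
        have := Complex.abs_im_le_norm (Complex.I * (a:ℂ) - (b:ℂ))
        simpa using this
      exact h1.trans (claimA n m a b hab S hS w hw)
  rw [hqn, norm_smul, Real.norm_eq_abs, abs_of_pos hrn]
  have hmain : ‖(1 - t) • ((u:Quaternion ℝ) ^ n * (a : Quaternion ℝ))
      + t • (u ^ n * (a : Quaternion ℝ) - u ^ m * (b : Quaternion ℝ))‖ ≤ S * (a - b) := by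
    rcases haS with h | h
    · have ht1' : t = 1 := le_antisymm ht1 h
      simp only [ht1', sub_self, zero_smul, one_smul, zero_add]
      exact hD
    · calc ‖(1 - t) • ((u:Quaternion ℝ) ^ n * (a : Quaternion ℝ))
          + t • (u ^ n * (a : Quaternion ℝ) - u ^ m * (b : Quaternion ℝ))‖
          ≤ ‖(1 - t) • ((u:Quaternion ℝ) ^ n * (a : Quaternion ℝ))‖
            + ‖t • (u ^ n * (a : Quaternion ℝ) - u ^ m * (b : Quaternion ℝ))‖ := norm_add_le _ _
        _ = (1 - t) * |a| + t * ‖u ^ n * (a : Quaternion ℝ) - u ^ m * (b : Quaternion ℝ)‖ := by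
            rw [norm_smul, norm_smul, Real.norm_eq_abs, Real.norm_eq_abs, hDa,
              abs_of_nonneg (by linarith : (0:ℝ) ≤ 1 - t), abs_of_pos ht0]
        _ ≤ (1 - t) * (S * (a - b)) + t * (S * (a - b)) := by
            have h1t : (0:ℝ) ≤ 1 - t := by linarith
            gcongr
        _ = S * (a - b) := by ring
  exact mul_le_mul_of_nonneg_left hmain hrn.le

lemma oneLeS (n m : ℕ) (a b : ℝ) (hab : b ≠ a) :
    1 ≤ ⨆ w : {w : Quaternion ℝ // ‖w‖ = 1},
      ‖(w : Quaternion ℝ) ^ n * (a : Quaternion ℝ) -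
        (w : Quaternion ℝ) ^ m * (b : Quaternion ℝ)‖ / |a - b| := by
  have habs : (0:ℝ) < |a - b| := abs_pos.mpr (sub_ne_zero.mpr (Ne.symm hab))
  have h := le_ciSup (bddF n m a b) (⟨1, norm_one⟩ : {w : Quaternion ℝ // ‖w‖ = 1})
  have hval : ‖(1 : Quaternion ℝ) ^ n * (a : Quaternion ℝ) -
      (1 : Quaternion ℝ) ^ m * (b : Quaternion ℝ)‖ / |a - b| = 1 := by
    rw [one_pow, one_pow, one_mul, one_mul]
    have : (a : Quaternion ℝ) - (b : Quaternion ℝ) = ((a - b : ℝ) : Quaternion ℝ) := by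
      push_cast; ring
    rw [this, Quaternion.norm_coe, Real.norm_eq_abs, div_self habs.ne']
  rwa [hval] at h


end AuxEK

/-- Quaternionic Eneström–Kakeya-type theorem for lacunary polynomials with real,
monotonically increasing coefficients, no two adjacent ones equal. -/
theorem stmt_4 (k : ℕ) (N : ℕ → ℕ) (a : ℕ → ℝ)
    (hN0 : N 0 = 0) (hNmono : ∀ j, j < k → N j < N (j + 1))
    (hak : a k ≠ 0)
    (hadj : ∀ j, j < k → a j ≠ a (j + 1))
    (hamono : ∀ j, j < k → a j ≤ a (j + 1))
    (Mj : ℕ → ℝ)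
    (hMj : ∀ j, 1 ≤ j → j ≤ k →
      Mj j = ⨆ q : {q : Quaternion ℝ // ‖q‖ = 1},
        ‖(q : Quaternion ℝ) ^ (N j) * (a j : Quaternion ℝ) -
          (q : Quaternion ℝ) ^ (N (j - 1) + 1) * (a (j - 1) : Quaternion ℝ)‖ /
            |a j - a (j - 1)|)
    (M : ℝ) (hM : M = ⨆ j ∈ Finset.Icc 1 k, Mj j)
    (q : Quaternion ℝ)
    (hq : ∑ j ∈ Finset.range (k + 1), q ^ (N j) * (a j : Quaternion ℝ) = 0) :
    ‖q‖ ≤ (M / |a k|) * (a k - a 0 + |a 0|) := by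
  -- k = 0 is contradictory
  rcases Nat.eq_zero_or_pos k with hk0 | hk0
  · subst hk0
    rw [Finset.sum_range_one, hN0, pow_zero, one_mul] at hq
    rw [show (0 : Quaternion ℝ) = ((0:ℝ) : Quaternion ℝ) by norm_num] at hq
    exact absurd (Quaternion.coe_injective hq) hak
  -- monotonicity of a
  have step : ∀ i j : ℕ, i ≤ j → j ≤ k → a i ≤ a j := by
    intro i j hij
    induction hij with
    | refl => intro _; exact le_rfl
    | @step m h ih =>
      intro hmk
      exact le_trans (ih (le_trans (Nat.le_succ m) hmk)) (hamono m (Nat.lt_of_succ_le hmk))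
  have stepN : ∀ i j : ℕ, i ≤ j → j ≤ k → N i ≤ N j := by
    intro i j hij
    induction hij with
    | refl => intro _; exact le_rfl
    | @step m h ih =>
      intro hmk
      exact le_trans (ih (le_trans (Nat.le_succ m) hmk)) (hNmono m (Nat.lt_of_succ_le hmk)).le
  -- 1 ≤ Mj j for j in [1,k]
  have hMj1 : ∀ j, 1 ≤ j → j ≤ k → 1 ≤ Mj j := by
    intro j h1 h2
    rw [hMj j h1 h2]
    have hne : a (j - 1) ≠ a j := by
      have := hadj (j - 1) (by omega)
      rwa [Nat.sub_add_cancel h1] at this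
    exact oneLeS _ _ _ _ hne
  -- Mj j ≤ M
  have hMjM : ∀ j, 1 ≤ j → j ≤ k → Mj j ≤ M := by
    intro j h1 h2
    have hmem : j ∈ Finset.Icc 1 k := Finset.mem_Icc.mpr ⟨h1, h2⟩
    have hbdd : BddAbove (Set.range fun j => ⨆ _ : j ∈ Finset.Icc 1 k, Mj j) := by
      refine ⟨∑ i ∈ Finset.Icc 1 k, |Mj i|, ?_⟩
      rintro x ⟨i, rfl⟩
      show (⨆ _ : i ∈ Finset.Icc 1 k, Mj i) ≤ _
      by_cases hi : i ∈ Finset.Icc 1 k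
      · rw [ciSup_pos hi]
        exact le_trans (le_abs_self _)
          (Finset.single_le_sum (f := fun i => |Mj i|) (fun _ _ => abs_nonneg _) hi)
      · haveI : IsEmpty (i ∈ Finset.Icc 1 k) := isEmpty_Prop.mpr hi
        rw [Real.iSup_of_isEmpty]
        exact Finset.sum_nonneg (fun _ _ => abs_nonneg _)
    have := le_ciSup hbdd j
    rw [ciSup_pos hmem] at this
    rw [hM]
    exact this
  have hM1 : (1:ℝ) ≤ M := le_trans (hMj1 k hk0 le_rfl) (hMjM k hk0 le_rfl)
  have hakpos : (0:ℝ) < |a k| := abs_pos.mpr hak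
  have ha0k : a 0 ≤ a k := step 0 k (Nat.zero_le k) le_rfl
  have hX : |a k| ≤ a k - a 0 + |a 0| := by
    rcases abs_cases (a 0) with ⟨h0, _⟩ | ⟨h0, _⟩ <;>
      rcases abs_cases (a k) with ⟨hk', _⟩ | ⟨hk', _⟩ <;> linarith
  rw [div_mul_eq_mul_div, le_div_iff₀ hakpos]
  -- goal : ‖q‖ * |a k| ≤ M * (a k - a 0 + |a 0|)
  rcases le_or_gt ‖q‖ 1 with hq1 | hq1
  · nlinarith [abs_nonneg (a k), norm_nonneg q]
  -- main case
  have hq1' : (1:ℝ) ≤ ‖q‖ := hq1.le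
  have h2 : ∑ j ∈ Finset.range (k + 1), q ^ (N j + 1) * (a j : Quaternion ℝ) = 0 := by
    have := congrArg (fun x => q * x) hq
    simp only [Finset.mul_sum, mul_zero] at this
    rw [← this]
    refine Finset.sum_congr rfl fun j _ => ?_
    rw [← mul_assoc, ← pow_succ']
  have tele : (a 0 : Quaternion ℝ) +
      ∑ j ∈ Finset.range k, (q ^ (N (j+1)) * (a (j+1) : Quaternion ℝ)
        - q ^ (N j + 1) * (a j : Quaternion ℝ))
      = q ^ (N k + 1) * (a k : Quaternion ℝ) := by
    rw [Finset.sum_sub_distrib]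
    have e1 : ∑ j ∈ Finset.range k, q ^ (N (j+1)) * (a (j+1) : Quaternion ℝ)
        = - (a 0 : Quaternion ℝ) := by
      have h := Finset.sum_range_succ' (fun j => q ^ (N j) * (a j : Quaternion ℝ)) k
      rw [hq, hN0, pow_zero, one_mul] at h
      linear_combination (norm := abel) -h
    have e2 : ∑ j ∈ Finset.range k, q ^ (N j + 1) * (a j : Quaternion ℝ)
        = - (q ^ (N k + 1) * (a k : Quaternion ℝ)) := by
      have h := Finset.sum_range_succ (fun j => q ^ (N j + 1) * (a j : Quaternion ℝ)) k
      rw [h2] at h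
      linear_combination (norm := abel) -h
    rw [e1, e2]
    abel
  have hterm : ∀ j ∈ Finset.range k,
      ‖q ^ (N (j+1)) * (a (j+1) : Quaternion ℝ) - q ^ (N j + 1) * (a j : Quaternion ℝ)‖
        ≤ ‖q‖ ^ (N k) * (M * (a (j+1) - a j)) := by
    intro j hj
    rw [Finset.mem_range] at hj
    have hjk : j < k := hj
    have hab : a j < a (j+1) := lt_of_le_of_ne (hamono j hjk) (hadj j hjk)
    have hS := hMj (j+1) (Nat.le_add_left 1 j) (Nat.succ_le_of_lt hjk)
    simp only [Nat.add_sub_cancel] at hS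
    have hk1 := key_s4 (N (j+1)) (N j + 1) (Nat.le_add_left 1 (N j)) (hNmono j hjk) (a (j+1))
      (a j) hab (Mj (j+1)) hS q hq1'
    refine hk1.trans ?_
    have hMjpos : (0:ℝ) ≤ Mj (j+1) :=
      le_trans zero_le_one (hMj1 (j+1) (Nat.le_add_left 1 j) (Nat.succ_le_of_lt hjk))
    have hpow : ‖q‖ ^ (N (j+1)) ≤ ‖q‖ ^ (N k) :=
      pow_le_pow_right₀ hq1' (stepN (j+1) k (Nat.succ_le_of_lt hjk) le_rfl)
    have hMle : Mj (j+1) ≤ M := hMjM (j+1) (Nat.le_add_left 1 j) (Nat.succ_le_of_lt hjk)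
    have hd : (0:ℝ) ≤ a (j+1) - a j := by linarith
    gcongr
  have hsum : ‖q ^ (N k + 1) * (a k : Quaternion ℝ)‖
      ≤ |a 0| + ‖q‖ ^ (N k) * (M * (a k - a 0)) := by
    rw [← tele]
    calc ‖(a 0 : Quaternion ℝ) + ∑ j ∈ Finset.range k, (q ^ (N (j+1)) * (a (j+1) : Quaternion ℝ)
          - q ^ (N j + 1) * (a j : Quaternion ℝ))‖
        ≤ ‖(a 0 : Quaternion ℝ)‖ + ‖∑ j ∈ Finset.range k, (q ^ (N (j+1)) * (a (j+1) : Quaternion ℝ)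
          - q ^ (N j + 1) * (a j : Quaternion ℝ))‖ := norm_add_le _ _
      _ ≤ |a 0| + ∑ j ∈ Finset.range k, ‖q ^ (N (j+1)) * (a (j+1) : Quaternion ℝ)
          - q ^ (N j + 1) * (a j : Quaternion ℝ)‖ := by
          rw [Quaternion.norm_coe, Real.norm_eq_abs]
          exact add_le_add_right (norm_sum_le _ _) _
      _ ≤ |a 0| + ∑ j ∈ Finset.range k, ‖q‖ ^ (N k) * (M * (a (j+1) - a j)) := by
          exact add_le_add_right (Finset.sum_le_sum hterm) _
      _ = |a 0| + ‖q‖ ^ (N k) * (M * (a k - a 0)) := by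
          rw [← Finset.mul_sum, ← Finset.mul_sum, Finset.sum_range_sub (fun j => a j)]
  have hlhs : ‖q ^ (N k + 1) * (a k : Quaternion ℝ)‖ = ‖q‖ ^ (N k) * (‖q‖ * |a k|) := by
    rw [norm_mul, norm_pow, Quaternion.norm_coe, Real.norm_eq_abs, pow_succ]
    ring
  rw [hlhs] at hsum
  have hA : (1:ℝ) ≤ ‖q‖ ^ (N k) := one_le_pow₀ hq1'
  have hApos : (0:ℝ) < ‖q‖ ^ (N k) := lt_of_lt_of_le one_pos hA
  have hfin : ‖q‖ ^ (N k) * (‖q‖ * |a k|) ≤ ‖q‖ ^ (N k) * (M * (a k - a 0 + |a 0|)) := by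
    have h0 : |a 0| ≤ ‖q‖ ^ (N k) * (M * |a 0|) := by
      calc |a 0| = 1 * |a 0| := (one_mul _).symm
        _ ≤ (‖q‖ ^ (N k) * M) * |a 0| := by
            refine mul_le_mul_of_nonneg_right ?_ (abs_nonneg _)
            nlinarith
        _ = ‖q‖ ^ (N k) * (M * |a 0|) := by ring
    nlinarith [hsum, h0]
  exact le_of_mul_le_mul_left hfin hApos
end

section
/- Let p(q) = Σ_{ν=0}^{n} q^ν a_ν be a quaternionic polynomial of degree n (coefficients a_ν ∈ ℍ, a_n ≠ 0). Then for every R > 1, sup_{|q|=R} ‖p(q)‖ ≤ R^n · sup_{|q|=1} ‖p(q)‖, with equality when p(q) = q^n λ for a constant quaternion λ. -/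
open Real Finset

section Stmt5Aux
open Quaternion

noncomputable section

abbrev H := Quaternion ℝ

noncomputable def myi : Quaternion ℝ := ⟨0,1,0,0⟩

noncomputable def slI (q : H) : H :=
  open scoped Classical in
if q.im = 0 then myi else ‖q.im‖⁻¹ • q.im

lemma slI_re (q : H) : (slI q).re = 0 := by
  unfold slI; split
  · rfl
  · show (‖q.im‖⁻¹ • q.im : Quaternion ℝ).re = 0
    simp [Quaternion.re_smul]

lemma slI_norm (q : H) : ‖slI q‖ = 1 := by
  unfold slI
  split_ifs with h
  · have h2 : Quaternion.normSq myi = 1 := by rw [Quaternion.normSq_def']; simp [myi]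
    have h3 := Quaternion.normSq_eq_norm_mul_self (a := myi)
    rw [h2] at h3
    nlinarith [norm_nonneg myi]
  · show ‖(‖q.im‖⁻¹ • q.im : Quaternion ℝ)‖ = 1
    rw [norm_smul, norm_inv, norm_norm]
    exact inv_mul_cancel₀ (norm_ne_zero_iff.mpr h)

lemma slI_star (q : H) : star (slI q) = -(slI q) :=
  Quaternion.star_eq_neg.mpr (slI_re q)

lemma slI_mul_self (q : H) : slI q * slI q = -1 := by
  have h := Quaternion.self_mul_star (a := slI q)
  rw [slI_star, mul_neg] at h
  have h2 : Quaternion.normSq (slI q) = 1 := by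
    rw [Quaternion.normSq_eq_norm_mul_self, slI_norm, mul_one]
  rw [h2] at h
  have := neg_eq_iff_eq_neg.mp h
  simpa using this

-- the slice embedding
noncomputable def slphi (q : H) : ℂ →ₐ[ℝ] H := Complex.liftAux (slI q) (slI_mul_self q)

lemma slphi_apply (q : H) (z : ℂ) : slphi q z = (z.re : H) + z.im • slI q := by
  rw [slphi, Complex.liftAux_apply]; rfl

lemma slphi_star (q : H) (z : ℂ) : star (slphi q z) = slphi q (starRingEnd ℂ z) := by
  rw [slphi_apply, slphi_apply]
  simp [StarModule.star_smul, slI_star, sub_eq_add_neg]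

lemma slphi_norm (q : H) (z : ℂ) : ‖slphi q z‖ = ‖z‖ := by
  have h : slphi q z * star (slphi q z) = ((‖z‖ ^ 2 : ℝ) : H) := by
    rw [slphi_star, ← map_mul]
    have hzz : z * starRingEnd ℂ z = ((‖z‖ ^ 2 : ℝ) : ℂ) := by
      rw [Complex.mul_conj]
      simp [Complex.sq_norm]
    rw [hzz]
    rw [show ((‖z‖ ^ 2 : ℝ) : ℂ) = algebraMap ℝ ℂ (‖z‖ ^ 2) from rfl]
    rw [AlgHom.commutes]
    rfl
  have h2 : ‖slphi q z‖ * ‖slphi q z‖ = ‖z‖ ^ 2 := by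
    have hn : ‖slphi q z‖ * ‖slphi q z‖ = ‖slphi q z * star (slphi q z)‖ := by
      rw [norm_mul, Quaternion.norm_star]
    rw [hn, h, Quaternion.norm_coe, Real.norm_eq_abs, abs_of_nonneg (by positivity)]
  nlinarith [norm_nonneg (slphi q z), norm_nonneg z, sq_nonneg (‖slphi q z‖ - ‖z‖)]

-- z_q : the complex number representing q in its slice
noncomputable def slz (q : H) : ℂ := ⟨q.re, ‖q.im‖⟩

lemma slphi_slz (q : H) : slphi q (slz q) = q := by
  rw [slphi_apply, slz]
  show (q.re : H) + ‖q.im‖ • slI q = q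
  unfold slI
  split_ifs with h
  · rw [h, norm_zero, zero_smul, add_zero]
    conv_rhs => rw [← Quaternion.re_add_im q, h, add_zero]
  · rw [smul_smul, mul_inv_cancel₀ (norm_ne_zero_iff.mpr h), one_smul, Quaternion.re_add_im]

lemma abs_slz (q : H) : ‖slz q‖ = ‖q‖ := by
  have h1 : ‖slz q‖ ^ 2 = q.re ^ 2 + ‖q.im‖ ^ 2 := by
    rw [Complex.sq_norm, Complex.normSq_apply]; simp [slz]; ring
  have h2 : ‖q‖ ^ 2 = q.re ^ 2 + ‖q.im‖ ^ 2 := by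
    have := Quaternion.normSq_eq_norm_mul_self (a := q)
    have h3 := Quaternion.normSq_eq_norm_mul_self (a := q.im)
    have h4 : Quaternion.normSq q = q.re ^ 2 + Quaternion.normSq q.im := by
      simp [Quaternion.normSq_def']; ring
    nlinarith
  nlinarith [norm_nonneg (slz q), norm_nonneg q, sq_nonneg (‖slz q‖ - ‖q‖)]

lemma key_s5 (n : ℕ) (a : ℕ → H) (R : ℝ) (hR : 1 < R) (S1 : ℝ)
    (hS1 : ∀ u : H, ‖u‖ = 1 → ‖∑ ν ∈ Finset.range (n+1), u ^ ν * a ν‖ ≤ S1)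
    (q : H) (hq : ‖q‖ = R) :
    ‖∑ ν ∈ Finset.range (n+1), q ^ ν * a ν‖ ≤ R ^ n * S1 := by
  set φ := slphi q with hφ
  letI : Module ℂ H := Module.compHom H (φ.toRingHom : ℂ →+* H)
  have hsmul : ∀ (z : ℂ) (x : H), z • x = φ z * x := fun _ _ => rfl
  haveI : IsScalarTower ℂ ℂ H := ⟨fun x y m => by
    rw [smul_eq_mul, hsmul, hsmul, hsmul, map_mul, mul_assoc]⟩
  letI : NormedSpace ℂ H :=
    ⟨fun z x => le_of_eq (by rw [hsmul, norm_mul, slphi_norm])⟩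
  set g : ℂ → H := fun z => ∑ ν ∈ Finset.range (n+1), z^(n-ν) • a ν with hgdef
  have hg : Differentiable ℂ g :=
    Differentiable.fun_sum fun ν _ => (differentiable_pow _).smul_const _
  have hgb : ∀ z : ℂ, ‖z‖ = 1 → ‖g z‖ ≤ S1 := by
    intro z hz
    have hz0 : z ≠ 0 := by
      intro h; rw [h] at hz; simp at hz
    have hge : g z = φ (z^n) * ∑ ν ∈ Finset.range (n+1), (φ z⁻¹) ^ ν * a ν := by
      rw [hgdef, Finset.mul_sum]
      refine Finset.sum_congr rfl fun ν hν => ?_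
      have hν' : ν ≤ n := Nat.lt_succ_iff.mp (Finset.mem_range.mp hν)
      rw [hsmul, ← map_pow, ← mul_assoc, ← map_mul]
      congr 2
      rw [inv_pow, pow_sub₀ z hz0 hν']
    rw [hge, norm_mul, slphi_norm, norm_pow, hz, one_pow, one_mul]
    exact hS1 _ (by rw [slphi_norm, norm_inv, hz, inv_one])
  have hmax : ∀ w : ℂ, ‖w‖ ≤ 1 → ‖g w‖ ≤ S1 := by
    intro w hw
    refine Complex.norm_le_of_forall_mem_frontier_norm_le (U := Metric.ball (0:ℂ) 1)
      Metric.isBounded_ball (hg.diffContOnCl) ?_ ?_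
    · intro z hz
      rw [frontier_ball (0:ℂ) one_ne_zero, mem_sphere_zero_iff_norm] at hz
      exact hgb z hz
    · rw [closure_ball (0:ℂ) one_ne_zero, Metric.mem_closedBall, dist_zero_right]
      exact hw
  -- now evaluate at q
  set z0 : ℂ := slz q with hz0def
  have habs : ‖z0‖ = R := by rw [hz0def, abs_slz, hq]
  have hz00 : z0 ≠ 0 := by
    intro h; rw [h] at habs; simp at habs; linarith
  have hpq : ∑ ν ∈ Finset.range (n+1), q ^ ν * a ν = z0 ^ n • g z0⁻¹ := by
    rw [hgdef]
    simp only [Finset.smul_sum]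
    refine Finset.sum_congr rfl fun ν hν => ?_
    have hν' : ν ≤ n := Nat.lt_succ_iff.mp (Finset.mem_range.mp hν)
    have hz0q : φ z0 = q := slphi_slz q
    rw [smul_smul, hsmul, inv_pow, ← pow_sub₀ z0 hz00 (Nat.sub_le n ν),
      Nat.sub_sub_self hν', map_pow, hz0q]
  rw [hpq, norm_smul, norm_pow, habs]
  have : ‖g z0⁻¹‖ ≤ S1 := hmax _ (by
    rw [norm_inv, habs]
    rw [inv_le_one_iff₀]
    right; linarith)
  have hRn : (0:ℝ) < R ^ n := pow_pos (by linarith) n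
  nlinarith

end

end Stmt5Aux

/-- Maximum-modulus-type growth lemma for quaternionic polynomials:
for `R > 1`, the sup of `‖p‖` on the sphere of radius `R` is at most `R^n` times
the sup on the unit sphere, with equality for `p(q) = q^n * λ`. -/
theorem stmt_5 (n : ℕ) (a : ℕ → Quaternion ℝ) (han : a n ≠ 0) (R : ℝ) (hR : 1 < R) :
    ((⨆ q : {q : Quaternion ℝ // ‖q‖ = R},
        ‖∑ ν ∈ Finset.range (n + 1), (q : Quaternion ℝ) ^ ν * a ν‖) ≤
      R ^ n * (⨆ q : {q : Quaternion ℝ // ‖q‖ = 1},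
        ‖∑ ν ∈ Finset.range (n + 1), (q : Quaternion ℝ) ^ ν * a ν‖)) ∧
    (∀ lam : Quaternion ℝ, lam ≠ 0 →
      (⨆ q : {q : Quaternion ℝ // ‖q‖ = R}, ‖(q : Quaternion ℝ) ^ n * lam‖) =
        R ^ n * (⨆ q : {q : Quaternion ℝ // ‖q‖ = 1}, ‖(q : Quaternion ℝ) ^ n * lam‖)) := by
  haveI hne1 : Nonempty {q : Quaternion ℝ // ‖q‖ = 1} := ⟨⟨1, norm_one⟩⟩
  haveI hneR : Nonempty {q : Quaternion ℝ // ‖q‖ = R} :=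
    ⟨⟨((R : ℝ) : Quaternion ℝ), by
      rw [Quaternion.norm_coe, Real.norm_eq_abs, abs_of_pos (by linarith)]⟩⟩
  constructor
  · set S1 : ℝ := ⨆ q : {q : Quaternion ℝ // ‖q‖ = 1},
        ‖∑ ν ∈ Finset.range (n + 1), (q : Quaternion ℝ) ^ ν * a ν‖ with hS1def
    have hcont : Continuous fun q : Quaternion ℝ =>
        ‖∑ ν ∈ Finset.range (n + 1), q ^ ν * a ν‖ :=
      (continuous_finset_sum _ fun ν _ => (continuous_pow ν).mul continuous_const).norm
    have hbdd : BddAbove (Set.range fun q : {q : Quaternion ℝ // ‖q‖ = 1} =>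
        ‖∑ ν ∈ Finset.range (n + 1), (q : Quaternion ℝ) ^ ν * a ν‖) := by
      have hcomp : IsCompact {q : Quaternion ℝ | ‖q‖ = 1} := by
        have : {q : Quaternion ℝ | ‖q‖ = 1} = Metric.sphere (0 : Quaternion ℝ) 1 := by
          ext x; simp [mem_sphere_zero_iff_norm]
        rw [this]; exact isCompact_sphere 0 1
      have : (Set.range fun q : {q : Quaternion ℝ // ‖q‖ = 1} =>
          ‖∑ ν ∈ Finset.range (n + 1), (q : Quaternion ℝ) ^ ν * a ν‖)
          = (fun q : Quaternion ℝ => ‖∑ ν ∈ Finset.range (n + 1), q ^ ν * a ν‖) ''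
            {q : Quaternion ℝ | ‖q‖ = 1} := by
        rw [← Subtype.range_coe (s := {q : Quaternion ℝ | ‖q‖ = 1}), ← Set.range_comp]
        rfl
      rw [this]
      exact (hcomp.image hcont).bddAbove
    have hS1 : ∀ u : Quaternion ℝ, ‖u‖ = 1 →
        ‖∑ ν ∈ Finset.range (n + 1), u ^ ν * a ν‖ ≤ S1 := fun u hu =>
      le_ciSup hbdd (⟨u, hu⟩ : {q : Quaternion ℝ // ‖q‖ = 1})
    refine ciSup_le fun ⟨q, hq⟩ => ?_
    exact key_s5 n a R hR S1 hS1 q hq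
  · intro lam _
    have h1 : (⨆ q : {q : Quaternion ℝ // ‖q‖ = R}, ‖(q : Quaternion ℝ) ^ n * lam‖)
        = R ^ n * ‖lam‖ := by
      have he : ∀ q : {q : Quaternion ℝ // ‖q‖ = R},
          ‖(q : Quaternion ℝ) ^ n * lam‖ = R ^ n * ‖lam‖ := fun ⟨q, hq⟩ => by
        rw [norm_mul, norm_pow, hq]
      rw [iSup_congr he, ciSup_const]
    have h2 : (⨆ q : {q : Quaternion ℝ // ‖q‖ = 1}, ‖(q : Quaternion ℝ) ^ n * lam‖)
        = ‖lam‖ := by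
      have he : ∀ q : {q : Quaternion ℝ // ‖q‖ = 1},
          ‖(q : Quaternion ℝ) ^ n * lam‖ = ‖lam‖ := fun ⟨q, hq⟩ => by
        rw [norm_mul, norm_pow, hq, one_pow, one_mul]
      rw [iSup_congr he, ciSup_const]
    rw [h1, h2]
end

section
/- Let q_1, q_2 be nonzero quaternions with |q_1| ≤ |q_2|, and suppose ∠(q_1, q_2) = 2θ′ for some θ′ with 2θ′ ≤ 2θ, where 0 ≤ θ ≤ π/2. Then |q_2 − q_1| ≤ (|q_2| − |q_1|) cos θ + (|q_1| + |q_2|) sin θ. -/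
open Real

/-- Carney et al.'s angle lemma: if `∠(q₁, q₂) = 2θ' ≤ 2θ` with `0 ≤ θ ≤ π/2`
and `‖q₁‖ ≤ ‖q₂‖`, then `‖q₂ - q₁‖ ≤ (‖q₂‖ - ‖q₁‖) cos θ + (‖q₁‖ + ‖q₂‖) sin θ`. -/
theorem stmt_6 (q₁ q₂ : Quaternion ℝ) (hq₁ : q₁ ≠ 0) (hq₂ : q₂ ≠ 0)
    (hle : ‖q₁‖ ≤ ‖q₂‖) (θ θ' : ℝ)
    (hangle : InnerProductGeometry.angle q₁ q₂ = 2 * θ')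
    (hθ' : 2 * θ' ≤ 2 * θ) (hθ0 : 0 ≤ θ) (hθπ : θ ≤ π / 2) :
    ‖q₂ - q₁‖ ≤ (‖q₂‖ - ‖q₁‖) * Real.cos θ + (‖q₁‖ + ‖q₂‖) * Real.sin θ := by
  set a := ‖q₁‖ with ha
  set b := ‖q₂‖ with hb
  have ha0 : 0 < a := norm_pos_iff.mpr hq₁
  have hb0 : 0 < b := norm_pos_iff.mpr hq₂
  have hcos0 : 0 ≤ Real.cos θ := Real.cos_nonneg_of_mem_Icc ⟨by linarith [Real.pi_pos], hθπ⟩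
  have hsin0 : 0 ≤ Real.sin θ := Real.sin_nonneg_of_nonneg_of_le_pi hθ0 (by linarith [Real.pi_pos])
  -- law of cosines
  have hlaw := InnerProductGeometry.norm_sub_sq_eq_norm_sq_add_norm_sq_sub_two_mul_norm_mul_norm_mul_cos_angle q₂ q₁
  rw [InnerProductGeometry.angle_comm, hangle] at hlaw
  -- cos (2θ') ≥ cos (2θ)
  have hθ'0 : 0 ≤ 2 * θ' := hangle ▸ InnerProductGeometry.angle_nonneg q₁ q₂
  have hθπ2 : 2 * θ ≤ π := by linarith
  have hcosmono : Real.cos (2 * θ) ≤ Real.cos (2 * θ') :=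
    Real.cos_le_cos_of_nonneg_of_le_pi hθ'0 hθπ2 hθ'
  have hcos2 : Real.cos (2 * θ) = Real.cos θ ^ 2 - Real.sin θ ^ 2 := Real.cos_two_mul' θ
  have hpy := Real.sin_sq_add_cos_sq θ
  have hsq : ‖q₂ - q₁‖ ^ 2 ≤ ((b - a) * Real.cos θ + (a + b) * Real.sin θ) ^ 2 := by
    rw [sq, hlaw]
    nlinarith [mul_nonneg (mul_nonneg hsin0 hcos0) (sub_nonneg.mpr hle), mul_pos ha0 hb0]
  have hrhs0 : 0 ≤ (b - a) * Real.cos θ + (a + b) * Real.sin θ :=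
    add_nonneg (mul_nonneg (by linarith) hcos0) (mul_nonneg (by linarith) hsin0)
  nlinarith [norm_nonneg (q₂ - q₁)]
end

section
/- Let F(q) = Σ_{ν} q^ν a_ν and G(q) = Σ_{ν} q^ν b_ν be quaternionic polynomials and let (F ⋆ G)(q) = Σ_{ν} q^ν c_ν be their regular (convolution) product, where c_ν = Σ_{μ=0}^{ν} a_μ b_{ν−μ}. Then for any q_0 ∈ ℍ, (F ⋆ G)(q_0) = 0 if and only if F(q_0) = 0, or F(q_0) ≠ 0 and G(F(q_0)^{−1} q_0 F(q_0)) = 0. -/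
open Finset

lemma tri_swap {M : Type*} [AddCommMonoid M] (f : ℕ → ℕ → M) :
    ∀ n : ℕ, ∑ ν ∈ Finset.range n, ∑ μ ∈ Finset.range (ν + 1), f μ (ν - μ)
      = ∑ μ ∈ Finset.range n, ∑ j ∈ Finset.range (n - μ), f μ j := by
  intro n
  induction n with
  | zero => simp
  | succ n ih =>
    rw [Finset.sum_range_succ, ih]
    have h1 : ∑ μ ∈ Finset.range (n + 1), f μ (n - μ)
        = ∑ μ ∈ Finset.range n, f μ (n - μ) + f n 0 := by
      rw [Finset.sum_range_succ, Nat.sub_self]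
    have h2 : ∀ μ ∈ Finset.range n, ∑ j ∈ Finset.range (n + 1 - μ), f μ j
        = ∑ j ∈ Finset.range (n - μ), f μ j + f μ (n - μ) := by
      intro μ hμ
      have : n + 1 - μ = (n - μ) + 1 := by
        rw [Nat.succ_sub (Nat.le_of_lt (Finset.mem_range.1 hμ))]
      rw [this, Finset.sum_range_succ]
    have h3 : ∑ μ ∈ Finset.range (n + 1), ∑ j ∈ Finset.range (n + 1 - μ), f μ j
        = ∑ μ ∈ Finset.range n, (∑ j ∈ Finset.range (n - μ), f μ j + f μ (n - μ)) + f n 0 := by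
      rw [Finset.sum_range_succ, Finset.sum_congr rfl h2]
      simp
    rw [h3, Finset.sum_add_distrib, h1]
    abel

lemma conj_pow' {x y : Quaternion ℝ} (hx : x ≠ 0) (n : ℕ) :
    (x⁻¹ * y * x) ^ n = x⁻¹ * y ^ n * x := by
  induction n with
  | zero => simp [inv_mul_cancel₀ hx]
  | succ n ih =>
    rw [pow_succ, ih, pow_succ,
      mul_assoc (x⁻¹ * y ^ n) x (x⁻¹ * y * x), ← mul_assoc x (x⁻¹ * y) x,
      ← mul_assoc x x⁻¹ y, mul_inv_cancel₀ hx, one_mul,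
      ← mul_assoc (x⁻¹ * y ^ n) y x, ← mul_assoc x⁻¹ (y ^ n) y]

/-- Zero set of the regular (convolution) product of two quaternionic polynomials
`F(q) = ∑_{ν=0}^{m} q^ν a_ν`, `G(q) = ∑_{ν=0}^{l} q^ν b_ν`:
`(F ⋆ G)(q₀) = 0` iff `F(q₀) = 0`, or `F(q₀) ≠ 0` and `G(F(q₀)⁻¹ q₀ F(q₀)) = 0`. -/
theorem stmt_7 (m l : ℕ) (a b : ℕ → Quaternion ℝ)
    (ha : ∀ ν, m < ν → a ν = 0) (hb : ∀ ν, l < ν → b ν = 0)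
    (F G FG : Quaternion ℝ → Quaternion ℝ)
    (hF : ∀ q, F q = ∑ ν ∈ Finset.range (m + 1), q ^ ν * a ν)
    (hG : ∀ q, G q = ∑ ν ∈ Finset.range (l + 1), q ^ ν * b ν)
    (hFG : ∀ q, FG q = ∑ ν ∈ Finset.range (m + l + 1),
      q ^ ν * ∑ μ ∈ Finset.range (ν + 1), a μ * b (ν - μ))
    (q₀ : Quaternion ℝ) :
    FG q₀ = 0 ↔ F q₀ = 0 ∨ (F q₀ ≠ 0 ∧ G ((F q₀)⁻¹ * q₀ * F q₀) = 0) := by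
  -- key: FG q₀ = ∑ j, q₀^j * F q₀ * b j
  have key : FG q₀ = ∑ j ∈ Finset.range (l + 1), q₀ ^ j * F q₀ * b j := by
    rw [hFG]
    have e1 : ∀ ν ∈ Finset.range (m + l + 1),
        q₀ ^ ν * ∑ μ ∈ Finset.range (ν + 1), a μ * b (ν - μ)
        = ∑ μ ∈ Finset.range (ν + 1), q₀ ^ (μ + (ν - μ)) * (a μ * b (ν - μ)) := by
      intro ν _
      rw [Finset.mul_sum]
      refine Finset.sum_congr rfl fun μ hμ => ?_
      rw [Nat.add_sub_cancel' (Nat.lt_succ_iff.1 (Finset.mem_range.1 hμ))]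
    rw [Finset.sum_congr rfl e1,
      tri_swap (fun μ j => q₀ ^ (μ + j) * (a μ * b j)) (m + l + 1)]
    -- now: ∑ μ < m+l+1, ∑ j < m+l+1-μ, q₀^(μ+j) (a μ b j)
    -- drop μ > m
    rw [show m + l + 1 = (m + 1) + l by omega]
    rw [Finset.sum_range_add]
    have z1 : ∑ i ∈ Finset.range l, ∑ j ∈ Finset.range (m + 1 + l - (m + 1 + i)),
        q₀ ^ (m + 1 + i + j) * (a (m + 1 + i) * b j) = 0 := by
      apply Finset.sum_eq_zero; intro i _
      apply Finset.sum_eq_zero; intro j _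
      rw [ha (m + 1 + i) (by omega), zero_mul, mul_zero]
    rw [z1, add_zero]
    -- for μ ≤ m, inner range (m+1+l-μ) ⊇ range (l+1), shrink
    have e2 : ∀ μ ∈ Finset.range (m + 1),
        ∑ j ∈ Finset.range (m + 1 + l - μ), q₀ ^ (μ + j) * (a μ * b j)
        = ∑ j ∈ Finset.range (l + 1), q₀ ^ (μ + j) * (a μ * b j) := by
      intro μ hμ
      have hμm : μ ≤ m := Nat.lt_succ_iff.1 (Finset.mem_range.1 hμ)
      symm
      apply Finset.sum_subset
      · intro j hj; simp only [Finset.mem_range] at *; omega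
      · intro j _ hj
        simp only [Finset.mem_range, not_lt] at hj
        rw [hb j (by omega), mul_zero, mul_zero]
    rw [Finset.sum_congr rfl e2, Finset.sum_comm]
    refine Finset.sum_congr rfl fun j _ => ?_
    rw [hF, Finset.mul_sum, Finset.sum_mul]
    refine Finset.sum_congr rfl fun μ _ => ?_
    rw [pow_add, pow_mul_comm]
    simp [mul_assoc]
  constructor
  · intro h
    by_cases hF0 : F q₀ = 0
    · exact Or.inl hF0
    · refine Or.inr ⟨hF0, ?_⟩
      rw [hG]
      have : ∑ ν ∈ Finset.range (l + 1), ((F q₀)⁻¹ * q₀ * F q₀) ^ ν * b ν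
          = (F q₀)⁻¹ * FG q₀ := by
        rw [key, Finset.mul_sum]
        refine Finset.sum_congr rfl fun ν _ => ?_
        rw [conj_pow' hF0]
        simp [mul_assoc]
      rw [this, h, mul_zero]
  · rintro (h | ⟨hF0, hG0⟩)
    · rw [key]
      apply Finset.sum_eq_zero; intro j _; rw [h, mul_zero, zero_mul]
    · rw [hG] at hG0
      have : FG q₀ = F q₀ * ∑ ν ∈ Finset.range (l + 1),
          ((F q₀)⁻¹ * q₀ * F q₀) ^ ν * b ν := by
        rw [key, Finset.mul_sum]
        refine Finset.sum_congr rfl fun ν _ => ?_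
        rw [conj_pow' hF0, ← mul_assoc, ← mul_assoc,
          ← mul_assoc (F q₀) (F q₀)⁻¹ (q₀ ^ ν), mul_inv_cancel₀ hF0, one_mul]
      rw [this, hG0, mul_zero]
end

section
/- Let p(q) = Σ_{ν=0}^{n} q^ν a_ν be a quaternionic polynomial of degree n with real coefficients satisfying 0 < a_0 ≤ a_1 ≤ ⋯ ≤ a_n. Then every zero q ∈ ℍ of p satisfies |q| ≤ 1. -/
open Finset

lemma tel_aux (n : ℕ) (a : ℕ → ℝ) (q : Quaternion ℝ) :
    (q - 1) * ∑ ν ∈ Finset.range (n + 1), q ^ ν * (a ν : Quaternion ℝ)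
      = q ^ (n + 1) * (a n : Quaternion ℝ) - (a 0 : Quaternion ℝ)
        - ∑ ν ∈ Finset.range n, q ^ (ν + 1) * ((a (ν + 1) - a ν : ℝ) : Quaternion ℝ) := by
  induction n with
  | zero => simp; noncomm_ring
  | succ k ih =>
    rw [Finset.sum_range_succ, Finset.sum_range_succ (fun ν => q ^ (ν + 1) * _), mul_add, ih]
    push_cast
    rw [show q ^ (k + 1 + 1) = q ^ (k + 1) * q from pow_succ q (k+1),
        show (q - 1) * (q ^ (k + 1) * ((a (k+1) : ℝ) : Quaternion ℝ))
          = q ^ (k+1) * q * ((a (k+1):ℝ) : Quaternion ℝ) - q ^ (k+1) * ((a (k+1):ℝ) : Quaternion ℝ) by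
          rw [sub_mul, one_mul, ← mul_assoc, ← pow_succ', pow_succ]]
    noncomm_ring

/-- Quaternionic Eneström–Kakeya theorem (Carney et al.): a polynomial
`p(q) = ∑_{ν=0}^{n} q^ν a_ν` with real coefficients `0 < a_0 ≤ a_1 ≤ ⋯ ≤ a_n`
has all its zeros in the closed unit ball. -/
theorem stmt_8 (n : ℕ) (a : ℕ → ℝ) (ha0 : 0 < a 0)
    (hmono : ∀ ν, ν < n → a ν ≤ a (ν + 1))
    (q : Quaternion ℝ)
    (hq : ∑ ν ∈ Finset.range (n + 1), q ^ ν * (a ν : Quaternion ℝ) = 0) :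
    ‖q‖ ≤ 1 := by
  by_contra h
  push_neg at h
  have hq1 : (1 : ℝ) ≤ ‖q‖ := le_of_lt h
  have hle : ∀ m, m ≤ n → a 0 ≤ a m := by
    intro m hm
    induction m with
    | zero => exact le_refl (a 0)
    | succ k ih =>
      exact (ih (Nat.le_of_succ_le hm)).trans (hmono k hm)
  have han : 0 < a n := lt_of_lt_of_le ha0 (hle n le_rfl)
  have key : q ^ (n + 1) * (a n : Quaternion ℝ)
      = (a 0 : Quaternion ℝ)
        + ∑ ν ∈ Finset.range n, q ^ (ν + 1) * ((a (ν + 1) - a ν : ℝ) : Quaternion ℝ) := by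
    have h2 := tel_aux n a q
    rw [hq, mul_zero] at h2
    replace h2 := h2.symm
    rwa [sub_sub, sub_eq_zero] at h2
  have hnorm : ‖q‖ ^ (n + 1) * a n
      ≤ a 0 + ∑ ν ∈ Finset.range n, ‖q‖ ^ (ν + 1) * (a (ν + 1) - a ν) := by
    have h1 : ‖q ^ (n + 1) * (a n : Quaternion ℝ)‖ = ‖q‖ ^ (n + 1) * a n := by
      rw [norm_mul, norm_pow, Quaternion.norm_coe, Real.norm_eq_abs, abs_of_pos han]
    calc ‖q‖ ^ (n + 1) * a n = ‖q ^ (n + 1) * (a n : Quaternion ℝ)‖ := h1.symm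
      _ ≤ ‖(a 0 : Quaternion ℝ)‖
          + ‖∑ ν ∈ Finset.range n, q ^ (ν + 1) * ((a (ν + 1) - a ν : ℝ) : Quaternion ℝ)‖ := by
            rw [key]; exact norm_add_le _ _
      _ ≤ a 0 + ∑ ν ∈ Finset.range n, ‖q‖ ^ (ν + 1) * (a (ν + 1) - a ν) := by
            gcongr
            · rw [Quaternion.norm_coe, Real.norm_eq_abs, abs_of_pos ha0]
            · refine (norm_sum_le _ _).trans ?_
              apply Finset.sum_le_sum
              intro ν hν
              rw [norm_mul, norm_pow, Quaternion.norm_coe, Real.norm_eq_abs,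
                abs_of_nonneg (sub_nonneg.2 (hmono ν (Finset.mem_range.1 hν)))]
  have hbound : a 0 + ∑ ν ∈ Finset.range n, ‖q‖ ^ (ν + 1) * (a (ν + 1) - a ν)
      ≤ ‖q‖ ^ n * a n := by
    have hsum : ∑ ν ∈ Finset.range n, ‖q‖ ^ (ν + 1) * (a (ν + 1) - a ν)
        ≤ ∑ ν ∈ Finset.range n, ‖q‖ ^ n * (a (ν + 1) - a ν) := by
      apply Finset.sum_le_sum
      intro ν hν
      have hν' : ν + 1 ≤ n := Finset.mem_range.1 hν
      gcongr
      · exact sub_nonneg.2 (hmono ν (Finset.mem_range.1 hν))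
    have htel : ∑ ν ∈ Finset.range n, (a (ν + 1) - a ν) = a n - a 0 :=
      Finset.sum_range_sub a n
    have h0 : a 0 ≤ ‖q‖ ^ n * a 0 := by
      nlinarith [one_le_pow₀ hq1 (n := n), ha0.le]
    calc a 0 + ∑ ν ∈ Finset.range n, ‖q‖ ^ (ν + 1) * (a (ν + 1) - a ν)
        ≤ ‖q‖ ^ n * a 0 + ∑ ν ∈ Finset.range n, ‖q‖ ^ n * (a (ν + 1) - a ν) :=
          add_le_add h0 hsum
      _ = ‖q‖ ^ n * a n := by rw [← Finset.mul_sum, htel]; ring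
  have : ‖q‖ ^ (n + 1) * a n ≤ ‖q‖ ^ n * a n := hnorm.trans hbound
  have hlt : ‖q‖ ^ n < ‖q‖ ^ (n + 1) := by
    have := pow_lt_pow_right₀ h (Nat.lt_succ_self n)
    exact this
  nlinarith
end

section
/- Let p(q) = Σ_{ν=0}^{n} q^ν a_ν be a quaternionic polynomial of degree n with coefficients a_ν ∈ ℍ. Suppose b ∈ ℍ is a nonzero quaternion and there exists θ with 0 ≤ θ ≤ π/2 such that ∠(a_ν, b) ≤ θ for all 0 ≤ ν ≤ n, and assume |a_0| ≤ |a_1| ≤ ⋯ ≤ |a_n|. Then every zero q ∈ ℍ of p satisfies |q| ≤ cos θ + sin θ + (2 sin θ / |a_n|) Σ_{ν=0}^{n−1} |a_ν|. -/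
open Real Finset

open scoped RealInnerProductSpace

set_option maxHeartbeats 1000000


lemma aux_expand_inner (c p d r : ℝ) (x y b : Quaternion ℝ) :
    ⟪c • x - p • b, d • y - r • b⟫ =
      c * d * ⟪x, y⟫ - c * r * ⟪x, b⟫ - p * d * ⟪y, b⟫ + p * r * ‖b‖ ^ 2 := by
  simp only [inner_sub_left, inner_sub_right, real_inner_smul_left, real_inner_smul_right]
  rw [real_inner_self_eq_norm_sq, real_inner_comm b y]
  ring

lemma aux_expand_self (c p : ℝ) (x b : Quaternion ℝ) :
    ⟪c • x - p • b, c • x - p • b⟫ =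
      c ^ 2 * ‖x‖ ^ 2 - 2 * c * p * ⟪x, b⟫ + p ^ 2 * ‖b‖ ^ 2 := by
  simp only [inner_sub_left, inner_sub_right, real_inner_smul_left, real_inner_smul_right]
  rw [real_inner_self_eq_norm_sq, real_inner_self_eq_norm_sq, real_inner_comm b x]
  ring

lemma aux_inner_lb (θ : ℝ) (hC : 0 ≤ Real.cos θ) (hS : 0 ≤ Real.sin θ)
    (b x y : Quaternion ℝ) (hb : b ≠ 0)
    (hx : ‖x‖ * ‖b‖ * Real.cos θ ≤ ⟪x, b⟫) (hy : ‖y‖ * ‖b‖ * Real.cos θ ≤ ⟪y, b⟫) :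
    ‖x‖ * ‖y‖ * (Real.cos θ ^ 2 - Real.sin θ ^ 2) ≤ ⟪x, y⟫ := by
  have hbn : (0:ℝ) < ‖b‖ := norm_pos_iff.mpr hb
  have hxn := norm_nonneg x
  have hyn := norm_nonneg y
  have hpn : (0:ℝ) ≤ ⟪x, b⟫ := le_trans (by positivity) hx
  have hrn : (0:ℝ) ≤ ⟪y, b⟫ := le_trans (by positivity) hy
  have hsc : Real.sin θ ^ 2 = 1 - Real.cos θ ^ 2 := by
    nlinarith [Real.sin_sq_add_cos_sq θ]
  set u : Quaternion ℝ := (‖b‖^2) • x - ⟪x, b⟫ • b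
  set v : Quaternion ℝ := (‖b‖^2) • y - ⟪y, b⟫ • b
  have huv : ⟪u, v⟫ = ‖b‖^2 * ‖b‖^2 * ⟪x, y⟫ - ‖b‖^2 * (⟪x, b⟫ * ⟪y, b⟫) := by
    rw [aux_expand_inner]; ring
  have hu2 : ‖u‖^2 = ‖b‖^2 * (‖b‖^2 * ‖x‖^2 - ⟪x, b⟫^2) := by
    rw [← real_inner_self_eq_norm_sq, aux_expand_self]; ring
  have hv2 : ‖v‖^2 = ‖b‖^2 * (‖b‖^2 * ‖y‖^2 - ⟪y, b⟫^2) := by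
    rw [← real_inner_self_eq_norm_sq, aux_expand_self]; ring
  have hus : ‖u‖ ≤ ‖b‖^2 * ‖x‖ * Real.sin θ := by
    have hsq : ‖u‖^2 ≤ (‖b‖^2 * ‖x‖ * Real.sin θ)^2 := by
      have expand : (‖b‖^2 * ‖x‖ * Real.sin θ)^2
          = ‖b‖^2 * ‖b‖^2 * ‖x‖^2 * Real.sin θ^2 := by ring
      rw [hu2, expand, hsc]
      nlinarith [mul_le_mul_of_nonneg_left
        (mul_self_le_mul_self (by positivity : (0:ℝ) ≤ ‖x‖ * ‖b‖ * Real.cos θ) hx)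
        (sq_nonneg ‖b‖)]
    nlinarith [norm_nonneg u, hsq, mul_nonneg (mul_nonneg (sq_nonneg ‖b‖) hxn) hS]
  have hvs : ‖v‖ ≤ ‖b‖^2 * ‖y‖ * Real.sin θ := by
    have hsq : ‖v‖^2 ≤ (‖b‖^2 * ‖y‖ * Real.sin θ)^2 := by
      have expand : (‖b‖^2 * ‖y‖ * Real.sin θ)^2
          = ‖b‖^2 * ‖b‖^2 * ‖y‖^2 * Real.sin θ^2 := by ring
      rw [hv2, expand, hsc]
      nlinarith [mul_le_mul_of_nonneg_left
        (mul_self_le_mul_self (by positivity : (0:ℝ) ≤ ‖y‖ * ‖b‖ * Real.cos θ) hy)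
        (sq_nonneg ‖b‖)]
    nlinarith [norm_nonneg v, hsq, mul_nonneg (mul_nonneg (sq_nonneg ‖b‖) hyn) hS]
  have hcs : -(‖u‖ * ‖v‖) ≤ ⟪u, v⟫ := (abs_le.mp (abs_real_inner_le_norm u v)).1
  have hprod : ‖u‖ * ‖v‖ ≤ (‖b‖^2 * ‖x‖ * Real.sin θ) * (‖b‖^2 * ‖y‖ * Real.sin θ) :=
    mul_le_mul hus hvs (norm_nonneg v) (by positivity)
  have hpr : ‖b‖^2 * ((‖x‖ * ‖b‖ * Real.cos θ) * (‖y‖ * ‖b‖ * Real.cos θ)) ≤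
      ‖b‖^2 * (⟪x, b⟫ * ⟪y, b⟫) :=
    mul_le_mul_of_nonneg_left (mul_le_mul hx hy (by positivity) hpn) (sq_nonneg ‖b‖)
  have hb4 : (0:ℝ) < ‖b‖^2 * ‖b‖^2 := by positivity
  nlinarith [huv, hcs, hprod, hpr, hb4]

lemma aux_diff_bound (θ : ℝ) (hC : 0 ≤ Real.cos θ) (hS : 0 ≤ Real.sin θ)
    (x y : Quaternion ℝ) (hxy : ‖x‖ ≤ ‖y‖)
    (hinner : ‖x‖ * ‖y‖ * (Real.cos θ ^ 2 - Real.sin θ ^ 2) ≤ ⟪x, y⟫) :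
    ‖y - x‖ ≤ (‖y‖ - ‖x‖) * Real.cos θ + (‖y‖ + ‖x‖) * Real.sin θ := by
  have pyth := Real.sin_sq_add_cos_sq θ
  have hsq : ‖y - x‖^2 ≤ ((‖y‖ - ‖x‖) * Real.cos θ + (‖y‖ + ‖x‖) * Real.sin θ)^2 := by
    rw [norm_sub_sq_real, real_inner_comm]
    nlinarith [hinner, mul_nonneg (mul_nonneg (mul_nonneg (sub_nonneg.mpr hxy) hC)
      (by positivity : (0:ℝ) ≤ ‖y‖ + ‖x‖)) hS]
  have hRn : 0 ≤ (‖y‖ - ‖x‖) * Real.cos θ + (‖y‖ + ‖x‖) * Real.sin θ :=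
    add_nonneg (mul_nonneg (sub_nonneg.mpr hxy) hC) (mul_nonneg (by positivity) hS)
  nlinarith [norm_nonneg (y - x), hsq]

/-- Quaternionic Eneström–Kakeya-type theorem of Carney et al.: if all coefficients
lie within angle `θ ≤ π/2` of a fixed nonzero quaternion `b` and their norms are
increasing, then all zeros of `p(q) = ∑_{ν=0}^{n} q^ν a_ν` lie in
`‖q‖ ≤ cos θ + sin θ + (2 sin θ / ‖a_n‖) ∑_{ν=0}^{n-1} ‖a_ν‖`. -/
theorem stmt_9 (n : ℕ) (a : ℕ → Quaternion ℝ) (han : a n ≠ 0)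
    (b : Quaternion ℝ) (hb : b ≠ 0) (θ : ℝ) (hθ0 : 0 ≤ θ) (hθπ : θ ≤ π / 2)
    (hangle : ∀ ν, ν ≤ n → InnerProductGeometry.angle (a ν) b ≤ θ)
    (hmono : ∀ ν, ν < n → ‖a ν‖ ≤ ‖a (ν + 1)‖)
    (q : Quaternion ℝ)
    (hq : ∑ ν ∈ Finset.range (n + 1), q ^ ν * a ν = 0) :
    ‖q‖ ≤ Real.cos θ + Real.sin θ +
      2 * Real.sin θ / ‖a n‖ * ∑ ν ∈ Finset.range n, ‖a ν‖ := by
  have hpi := Real.pi_pos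
  have hC : 0 ≤ Real.cos θ := Real.cos_nonneg_of_mem_Icc ⟨by linarith, hθπ⟩
  have hS : 0 ≤ Real.sin θ := Real.sin_nonneg_of_nonneg_of_le_pi hθ0 (by linarith)
  have hCS : 1 ≤ Real.cos θ + Real.sin θ := by
    nlinarith [Real.sin_sq_add_cos_sq θ, Real.cos_le_one θ, Real.sin_le_one θ,
      mul_nonneg hC hS]
  have han' : (0:ℝ) < ‖a n‖ := norm_pos_iff.mpr han
  have hTn : (0:ℝ) ≤ ∑ ν ∈ Finset.range n, ‖a ν‖ :=
    Finset.sum_nonneg fun i _ => norm_nonneg _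
  have htail : 0 ≤ 2 * Real.sin θ / ‖a n‖ * ∑ ν ∈ Finset.range n, ‖a ν‖ :=
    mul_nonneg (div_nonneg (by linarith) (norm_nonneg _)) hTn
  by_cases hq1 : ‖q‖ ≤ 1
  · linarith
  push_neg at hq1
  -- inner product lower bounds from the angle hypothesis
  have hinner : ∀ ν, ν ≤ n → ‖a ν‖ * ‖b‖ * Real.cos θ ≤ ⟪a ν, b⟫ := by
    intro ν hν
    have h1 : Real.cos θ ≤ Real.cos (InnerProductGeometry.angle (a ν) b) :=
      Real.cos_le_cos_of_nonneg_of_le_pi (InnerProductGeometry.angle_nonneg _ _)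
        (by linarith) (hangle ν hν)
    calc ‖a ν‖ * ‖b‖ * Real.cos θ
        ≤ ‖a ν‖ * ‖b‖ * Real.cos (InnerProductGeometry.angle (a ν) b) :=
          mul_le_mul_of_nonneg_left h1 (by positivity)
      _ = Real.cos (InnerProductGeometry.angle (a ν) b) * (‖a ν‖ * ‖b‖) := by ring
      _ = ⟪a ν, b⟫ := InnerProductGeometry.cos_angle_mul_norm_mul_norm _ _
  have hdiff : ∀ ν, ν < n → ‖a (ν + 1) - a ν‖ ≤
      (‖a (ν + 1)‖ - ‖a ν‖) * Real.cos θ + (‖a (ν + 1)‖ + ‖a ν‖) * Real.sin θ := by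
    intro ν hν
    exact aux_diff_bound θ hC hS _ _ (hmono ν hν)
      (aux_inner_lb θ hC hS b _ _ hb (hinner ν hν.le) (hinner (ν + 1) hν))
  -- the algebraic identity
  have hq' : ∑ ν ∈ Finset.range (n + 1), q ^ (ν + 1) * a ν = 0 := by
    have : q * ∑ ν ∈ Finset.range (n + 1), q ^ ν * a ν = 0 := by rw [hq, mul_zero]
    rw [Finset.mul_sum] at this
    rw [← this]
    exact Finset.sum_congr rfl fun ν _ => by rw [← mul_assoc, ← pow_succ']
  have s2 : ∑ ν ∈ Finset.range n, q ^ (ν + 1) * a ν = -(q ^ (n + 1) * a n) := by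
    have := Finset.sum_range_succ (fun ν => q ^ (ν + 1) * a ν) n
    rw [hq'] at this
    linear_combination (norm := abel) -this
  have s1 : ∑ ν ∈ Finset.range n, q ^ (ν + 1) * a (ν + 1) = -(a 0) := by
    have := Finset.sum_range_succ' (fun ν => q ^ ν * a ν) n
    rw [hq] at this
    simp only [pow_zero, one_mul] at this
    linear_combination (norm := abel) -this
  have key : q ^ (n + 1) * a n = a 0 + ∑ ν ∈ Finset.range n, q ^ (ν + 1) * (a (ν + 1) - a ν) := by
    have hsplit : ∑ ν ∈ Finset.range n, q ^ (ν + 1) * (a (ν + 1) - a ν)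
        = ∑ ν ∈ Finset.range n, q ^ (ν + 1) * a (ν + 1)
          - ∑ ν ∈ Finset.range n, q ^ (ν + 1) * a ν := by
      rw [← Finset.sum_sub_distrib]
      exact Finset.sum_congr rfl fun ν _ => mul_sub _ _ _
    rw [hsplit, s1, s2]
    abel
  -- norm estimate
  have hnorm : ‖q‖ ^ (n + 1) * ‖a n‖ ≤
      ‖a 0‖ + ∑ ν ∈ Finset.range n, ‖q‖ ^ (ν + 1) * ‖a (ν + 1) - a ν‖ := by
    calc ‖q‖ ^ (n + 1) * ‖a n‖ = ‖q ^ (n + 1) * a n‖ := by rw [norm_mul, norm_pow]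
      _ = ‖a 0 + ∑ ν ∈ Finset.range n, q ^ (ν + 1) * (a (ν + 1) - a ν)‖ := by rw [key]
      _ ≤ ‖a 0‖ + ‖∑ ν ∈ Finset.range n, q ^ (ν + 1) * (a (ν + 1) - a ν)‖ := norm_add_le _ _
      _ ≤ ‖a 0‖ + ∑ ν ∈ Finset.range n, ‖q ^ (ν + 1) * (a (ν + 1) - a ν)‖ :=
          add_le_add_right (norm_sum_le _ _) _
      _ = ‖a 0‖ + ∑ ν ∈ Finset.range n, ‖q‖ ^ (ν + 1) * ‖a (ν + 1) - a ν‖ := by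
          simp [norm_mul, norm_pow]
  -- bound each summand by ‖q‖ ^ n * D ν
  have hterm : ∀ ν ∈ Finset.range n, ‖q‖ ^ (ν + 1) * ‖a (ν + 1) - a ν‖ ≤
      ‖q‖ ^ n * ((‖a (ν + 1)‖ - ‖a ν‖) * (Real.cos θ + Real.sin θ) + 2 * ‖a ν‖ * Real.sin θ) := by
    intro ν hν
    rw [Finset.mem_range] at hν
    have hpow : ‖q‖ ^ (ν + 1) ≤ ‖q‖ ^ n := pow_le_pow_right₀ hq1.le hν
    have hD : ‖a (ν + 1) - a ν‖ ≤
        (‖a (ν + 1)‖ - ‖a ν‖) * (Real.cos θ + Real.sin θ) + 2 * ‖a ν‖ * Real.sin θ := by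
      have := hdiff ν hν
      nlinarith [this]
    calc ‖q‖ ^ (ν + 1) * ‖a (ν + 1) - a ν‖ ≤ ‖q‖ ^ n * ‖a (ν + 1) - a ν‖ :=
          mul_le_mul_of_nonneg_right hpow (norm_nonneg _)
      _ ≤ ‖q‖ ^ n * ((‖a (ν + 1)‖ - ‖a ν‖) * (Real.cos θ + Real.sin θ) + 2 * ‖a ν‖ * Real.sin θ) :=
          mul_le_mul_of_nonneg_left hD (by positivity)
  have hsum : ∑ ν ∈ Finset.range n, ‖q‖ ^ (ν + 1) * ‖a (ν + 1) - a ν‖ ≤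
      ‖q‖ ^ n * ((‖a n‖ - ‖a 0‖) * (Real.cos θ + Real.sin θ)
        + 2 * Real.sin θ * ∑ ν ∈ Finset.range n, ‖a ν‖) := by
    calc ∑ ν ∈ Finset.range n, ‖q‖ ^ (ν + 1) * ‖a (ν + 1) - a ν‖
        ≤ ∑ ν ∈ Finset.range n, ‖q‖ ^ n *
            ((‖a (ν + 1)‖ - ‖a ν‖) * (Real.cos θ + Real.sin θ) + 2 * ‖a ν‖ * Real.sin θ) :=
          Finset.sum_le_sum hterm
      _ = ‖q‖ ^ n * ((‖a n‖ - ‖a 0‖) * (Real.cos θ + Real.sin θ)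
            + 2 * Real.sin θ * ∑ ν ∈ Finset.range n, ‖a ν‖) := by
          rw [← Finset.mul_sum]
          congr 1
          rw [Finset.sum_add_distrib, ← Finset.sum_mul,
            Finset.sum_range_sub (fun ν => ‖a ν‖)]
          rw [Finset.mul_sum]
          congr 1
          exact Finset.sum_congr rfl fun ν _ => by ring
  -- put it together
  have hqn : (1:ℝ) ≤ ‖q‖ ^ n := one_le_pow₀ hq1.le
  have hfinal : ‖q‖ ^ n * (‖q‖ * ‖a n‖) ≤
      ‖q‖ ^ n * (‖a n‖ * (Real.cos θ + Real.sin θ)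
        + 2 * Real.sin θ * ∑ ν ∈ Finset.range n, ‖a ν‖) := by
    have h0 : ‖a 0‖ ≤ ‖q‖ ^ n * ‖a 0‖ := le_mul_of_one_le_left (norm_nonneg _) hqn
    have e : ‖q‖ ^ (n + 1) * ‖a n‖ = ‖q‖ ^ n * (‖q‖ * ‖a n‖) := by ring
    have ha0 : (0:ℝ) ≤ ‖a 0‖ := norm_nonneg _
    nlinarith [hnorm, hsum, h0, mul_le_mul_of_nonneg_left hCS
      (mul_nonneg (pow_nonneg (norm_nonneg q) n) ha0)]
  have hstep : ‖q‖ * ‖a n‖ ≤ ‖a n‖ * (Real.cos θ + Real.sin θ)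
      + 2 * Real.sin θ * ∑ ν ∈ Finset.range n, ‖a ν‖ :=
    le_of_mul_le_mul_left hfinal (by positivity)
  rw [div_mul_eq_mul_div, ← sub_nonneg]
  have : Real.cos θ + Real.sin θ + 2 * Real.sin θ * (∑ ν ∈ Finset.range n, ‖a ν‖) / ‖a n‖ - ‖q‖
      = (‖a n‖ * (Real.cos θ + Real.sin θ)
        + 2 * Real.sin θ * ∑ ν ∈ Finset.range n, ‖a ν‖ - ‖q‖ * ‖a n‖) / ‖a n‖ := by
    field_simp
  rw [this]
  exact div_nonneg (by linarith) (norm_nonneg _)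
end

section
/- Let p(q) = Σ_{ν=0}^{n} q^ν a_ν be a quaternionic polynomial of degree n with coefficients a_ν = α_ν + β_ν i + γ_ν j + δ_ν k for 0 ≤ ν ≤ n, whose real parts satisfy 0 ≤ α_1 ≤ α_2 ≤ ⋯ ≤ α_n with α_n ≠ 0. Then every zero q ∈ ℍ of p satisfies |q| ≤ 1 + (2/α_n) Σ_{ν=0}^{n} |a_ν|. -/
open Finset

lemma re_le_norm_aux (x : Quaternion ℝ) : x.re ≤ ‖x‖ := by
  have h : ‖x‖ * ‖x‖ = Quaternion.normSq x := (Quaternion.normSq_eq_norm_mul_self x).symm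
  rw [Quaternion.normSq_def'] at h
  nlinarith [norm_nonneg x, sq_nonneg (‖x‖ - x.re), sq_nonneg x.imI, sq_nonneg x.imJ,
    sq_nonneg x.imK]

/-- Quaternionic Eneström–Kakeya-type theorem of Carney et al. for polynomials
whose coefficients have real parts satisfying `0 ≤ α_1 ≤ α_2 ≤ ⋯ ≤ α_n`, `α_n ≠ 0`:
all zeros lie in `‖q‖ ≤ 1 + (2/α_n) ∑_{ν=0}^{n} ‖a_ν‖`. -/
theorem stmt_10 (n : ℕ) (a : ℕ → Quaternion ℝ)
    (hα1 : 0 ≤ (a 1).re)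
    (hmono : ∀ ν, 1 ≤ ν → ν < n → (a ν).re ≤ (a (ν + 1)).re)
    (hαn : (a n).re ≠ 0)
    (q : Quaternion ℝ)
    (hq : ∑ ν ∈ Finset.range (n + 1), q ^ ν * a ν = 0) :
    ‖q‖ ≤ 1 + 2 / (a n).re * ∑ ν ∈ Finset.range (n + 1), ‖a ν‖ := by
  -- n = 0 is contradictory
  rcases Nat.eq_zero_or_pos n with hn | hn
  · subst hn
    simp at hq
    exact absurd (by rw [hq]; rfl) hαn
  -- α_n > 0
  have hαpos : 0 < (a n).re := by
    have hmono' : ∀ ν, 1 ≤ ν → ν ≤ n → (a 1).re ≤ (a ν).re := by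
      intro ν h1 h2
      induction ν with
      | zero => omega
      | succ m ih =>
        rcases Nat.eq_zero_or_pos m with hm | hm
        · subst hm; exact le_refl _
        · exact le_trans (ih hm (by omega)) (hmono m hm (by omega))
    exact lt_of_le_of_ne (le_trans hα1 (hmono' n hn le_rfl)) (Ne.symm hαn)
  set S := ∑ ν ∈ Finset.range (n + 1), ‖a ν‖ with hS
  have hSnonneg : 0 ≤ S := Finset.sum_nonneg fun _ _ => norm_nonneg _
  rcases le_or_gt ‖q‖ 1 with hq1 | hq1
  · have : 0 ≤ 2 / (a n).re * S := by positivity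
    linarith
  -- main case : ‖q‖ > 1
  have key : q ^ (n + 1) * a n = a 0 + ∑ ν ∈ Finset.range n, q ^ (ν + 1) * (a (ν + 1) - a ν) := by
    have h1 : ∑ ν ∈ Finset.range n, q ^ (ν + 1) * a (ν + 1) = -(a 0) := by
      have := Finset.sum_range_succ' (fun ν => q ^ ν * a ν) n
      rw [hq] at this
      simp only [pow_zero, one_mul] at this
      exact eq_neg_of_add_eq_zero_left this.symm
    have h2 : ∑ ν ∈ Finset.range n, q ^ (ν + 1) * a ν = -(q ^ (n + 1) * a n) := by
      have := Finset.sum_range_succ (fun ν => q ^ (ν + 1) * a ν) n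
      have h3 : ∑ ν ∈ Finset.range (n + 1), q ^ (ν + 1) * a ν = 0 := by
        have : ∑ ν ∈ Finset.range (n + 1), q ^ (ν + 1) * a ν
            = q * ∑ ν ∈ Finset.range (n + 1), q ^ ν * a ν := by
          rw [Finset.mul_sum]
          exact Finset.sum_congr rfl fun ν _ => by rw [pow_succ', mul_assoc]
        rw [this, hq, mul_zero]
      rw [h3] at this
      exact eq_neg_of_add_eq_zero_left this.symm
    calc q ^ (n + 1) * a n
        = a 0 + (∑ ν ∈ Finset.range n, q ^ (ν + 1) * a (ν + 1)
            - ∑ ν ∈ Finset.range n, q ^ (ν + 1) * a ν) := by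
          rw [h1, h2]; abel
      _ = a 0 + ∑ ν ∈ Finset.range n, q ^ (ν + 1) * (a (ν + 1) - a ν) := by
          rw [← Finset.sum_sub_distrib]
          congr 1
          exact Finset.sum_congr rfl fun ν _ => (mul_sub _ _ _).symm
  have hqn : (0:ℝ) < ‖q‖ ^ n := pow_pos (by linarith) n
  -- norm estimate
  have hnorm : ‖q‖ ^ (n + 1) * (a n).re ≤ ‖q‖ ^ n * (2 * S) := by
    have hL : ‖q‖ ^ (n + 1) * (a n).re ≤ ‖q ^ (n + 1) * a n‖ := by
      rw [norm_mul, norm_pow]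
      exact mul_le_mul_of_nonneg_left (re_le_norm_aux _) (by positivity)
    have hR : ‖a 0 + ∑ ν ∈ Finset.range n, q ^ (ν + 1) * (a (ν + 1) - a ν)‖
        ≤ ‖a 0‖ + ∑ ν ∈ Finset.range n, ‖q‖ ^ (ν + 1) * (‖a (ν + 1)‖ + ‖a ν‖) := by
      refine le_trans (norm_add_le _ _) (add_le_add_right ?_ _)
      refine le_trans (norm_sum_le _ _) (Finset.sum_le_sum fun ν _ => ?_)
      rw [norm_mul, norm_pow]
      exact mul_le_mul_of_nonneg_left (norm_sub_le _ _) (by positivity)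
    have hbound : ‖a 0‖ + ∑ ν ∈ Finset.range n, ‖q‖ ^ (ν + 1) * (‖a (ν + 1)‖ + ‖a ν‖)
        ≤ ‖q‖ ^ n * (2 * S) := by
      have hstep : ∀ ν ∈ Finset.range n, ‖q‖ ^ (ν + 1) * (‖a (ν + 1)‖ + ‖a ν‖)
          ≤ ‖q‖ ^ n * (‖a (ν + 1)‖ + ‖a ν‖) := by
        intro ν hν
        refine mul_le_mul_of_nonneg_right ?_ (by positivity)
        exact pow_le_pow_right₀ (by linarith) (by simpa using Finset.mem_range.mp hν)
      have h1q : (1:ℝ) ≤ ‖q‖ ^ n := one_le_pow₀ (le_of_lt hq1)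
      have hsum2 : ‖a 0‖ + ∑ ν ∈ Finset.range n, (‖a (ν + 1)‖ + ‖a ν‖) ≤ 2 * S := by
        rw [Finset.sum_add_distrib]
        have e1 : ∑ ν ∈ Finset.range n, ‖a (ν + 1)‖ = S - ‖a 0‖ := by
          have := Finset.sum_range_succ' (fun ν => ‖a ν‖) n
          rw [← hS] at this; linarith [this]
        have e2 : ∑ ν ∈ Finset.range n, ‖a ν‖ = S - ‖a n‖ := by
          have := Finset.sum_range_succ (fun ν => ‖a ν‖) n
          rw [← hS] at this; linarith [this]
        rw [e1, e2]
        have : 0 ≤ ‖a n‖ := norm_nonneg _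
        linarith
      calc ‖a 0‖ + ∑ ν ∈ Finset.range n, ‖q‖ ^ (ν + 1) * (‖a (ν + 1)‖ + ‖a ν‖)
          ≤ ‖a 0‖ + ∑ ν ∈ Finset.range n, ‖q‖ ^ n * (‖a (ν + 1)‖ + ‖a ν‖) :=
            add_le_add_right (Finset.sum_le_sum hstep) _
        _ = ‖a 0‖ + ‖q‖ ^ n * ∑ ν ∈ Finset.range n, (‖a (ν + 1)‖ + ‖a ν‖) := by
            rw [Finset.mul_sum]
        _ ≤ ‖q‖ ^ n * ‖a 0‖ + ‖q‖ ^ n * ∑ ν ∈ Finset.range n, (‖a (ν + 1)‖ + ‖a ν‖) := by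
            nlinarith [norm_nonneg (a 0), h1q]
        _ = ‖q‖ ^ n * (‖a 0‖ + ∑ ν ∈ Finset.range n, (‖a (ν + 1)‖ + ‖a ν‖)) := by ring
        _ ≤ ‖q‖ ^ n * (2 * S) := mul_le_mul_of_nonneg_left hsum2 (le_of_lt hqn)
    calc ‖q‖ ^ (n + 1) * (a n).re ≤ ‖q ^ (n + 1) * a n‖ := hL
      _ = ‖a 0 + ∑ ν ∈ Finset.range n, q ^ (ν + 1) * (a (ν + 1) - a ν)‖ := by rw [key]
      _ ≤ ‖a 0‖ + ∑ ν ∈ Finset.range n, ‖q‖ ^ (ν + 1) * (‖a (ν + 1)‖ + ‖a ν‖) := hR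
      _ ≤ ‖q‖ ^ n * (2 * S) := hbound
  have hmain : ‖q‖ * (a n).re ≤ 2 * S := by
    have : ‖q‖ ^ (n + 1) = ‖q‖ ^ n * ‖q‖ := pow_succ _ _
    rw [this] at hnorm
    have := (mul_le_mul_iff_right₀ hqn).mp (by linarith [hnorm] : ‖q‖ ^ n * (‖q‖ * (a n).re) ≤ ‖q‖ ^ n * (2 * S))
    exact this
  have : ‖q‖ ≤ 2 / (a n).re * S := by
    rw [div_mul_eq_mul_div, le_div_iff₀ hαpos]
    linarith
  linarith
end

section
/- Let 0 = n_0 < n_1 < ⋯ < n_k = n be integers and a_{n_0}, …, a_{n_k} ∈ ℍ with a_{n_j} ≠ a_{n_{j−1}} for j = 1, …, k. Define ξ_1(q) := Σ_{j=1}^{k} (q^{n_j} a_{n_j} − q^{n_{j−1}+1} a_{n_{j−1}}) + q^{n_0} a_{n_0}, and for j = 1, …, k set M_{n_j} := sup_{|q|=1} ‖q^{n_j} a_{n_j} − q^{n_{j−1}+1} a_{n_{j−1}}‖ / ‖a_{n_j} − a_{n_{j−1}}‖ with M := max_{1 ≤ j ≤ k} M_{n_j}. Then for every R > 1 and every q ∈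 ℍ with |q| = R, ‖ξ_1(q)‖ ≤ M R^n Σ_{j=1}^{k} ‖a_{n_j} − a_{n_{j−1}}‖ + ‖a_{n_0}‖ R^{n_0}. -/
open Finset

/-- The quaternion `i`. -/
noncomputable def auxI : Quaternion ℝ := ⟨0, 1, 0, 0⟩

/-- Every unit quaternion has a `d`-th root on the unit sphere. -/
lemma quat_root (s : Quaternion ℝ) (hs : ‖s‖ = 1) (d : ℕ) (hd : 0 < d) :
    ∃ u : Quaternion ℝ, ‖u‖ = 1 ∧ u ^ d = s := by
  classical
  have hns : Quaternion.normSq s = 1 := by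
    have := Quaternion.normSq_eq_norm_mul_self s
    rw [hs] at this; simpa using this
  have hsplit : Quaternion.normSq s = s.re ^ 2 + Quaternion.normSq s.im := by
    simp [Quaternion.normSq_def']
    ring
  have him2 : ‖s.im‖ ^ 2 = 1 - s.re ^ 2 := by
    rw [sq, ← Quaternion.normSq_eq_norm_mul_self]
    rw [hsplit] at hns; linarith
  have hre2 : s.re ^ 2 ≤ 1 := by nlinarith [sq_nonneg ‖s.im‖]
  have hre : -1 ≤ s.re ∧ s.re ≤ 1 := abs_le.mp (abs_le_one_iff_mul_self_le_one.mpr (by nlinarith))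
  set θ := Real.arccos s.re with hθ
  have hθ0 : 0 ≤ θ := Real.arccos_nonneg _
  have hcos : Real.cos θ = s.re := Real.cos_arccos hre.1 hre.2
  have hsin : Real.sin θ = ‖s.im‖ := by
    rw [hθ, Real.sin_arccos, show (1:ℝ) - s.re ^ 2 = ‖s.im‖ ^ 2 from him2.symm,
      Real.sqrt_sq (norm_nonneg _)]
  set v : Quaternion ℝ := if s.im = 0 then auxI else ‖s.im‖⁻¹ • s.im with hv
  have hvre : v.re = 0 := by
    rw [hv]; split_ifs with h
    · rfl
    · simp
  have hvnorm : ‖v‖ = 1 := by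
    rw [hv]; split_ifs with h
    · have h2 : Quaternion.normSq auxI = 1 := by
        rw [Quaternion.normSq_def']; simp [auxI]
      have h3 := Quaternion.normSq_eq_norm_mul_self auxI
      nlinarith [norm_nonneg auxI]
    · rw [norm_smul, Real.norm_eq_abs, abs_of_nonneg (by positivity),
        inv_mul_cancel₀ (norm_ne_zero_iff.mpr h)]
  have hsv : ‖s.im‖ • v = s.im := by
    rw [hv]; split_ifs with h
    · simp [h]
    · rw [smul_smul, mul_inv_cancel₀ (norm_ne_zero_iff.mpr h), one_smul]
  refine ⟨NormedSpace.exp ((θ / d) • v), ?_, ?_⟩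
  · rw [Quaternion.norm_exp]
    have : ((θ / d) • v).re = 0 := by simp [hvre]
    rw [this, NormedSpace.exp_zero]
    norm_num
  · letI : NormedAlgebra ℚ (Quaternion ℝ) := NormedAlgebra.restrictScalars ℚ ℝ _
    rw [← NormedSpace.exp_nsmul]
    have hds : d • ((θ / d) • v) = θ • v := by
      rw [← Nat.cast_smul_eq_nsmul ℝ, smul_smul,
        mul_div_cancel₀ _ (by exact_mod_cast hd.ne' : (d : ℝ) ≠ 0)]
    rw [hds, Quaternion.exp_of_re_eq_zero _ (by simp [hvre])]
    have hnθv : ‖θ • v‖ = θ := by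
      rw [norm_smul, hvnorm, mul_one, Real.norm_eq_abs, abs_of_nonneg hθ0]
    rw [hnθv, hcos]
    have hmain : (Real.sin θ / θ) • (θ • v) = ‖s.im‖ • v := by
      rcases eq_or_lt_of_le hθ0 with h0 | h0
      · have him0 : ‖s.im‖ = 0 := by rw [← hsin, ← h0, Real.sin_zero]
        simp [← h0, him0]
      · rw [smul_smul, div_mul_cancel₀ _ h0.ne', hsin]
    rw [hmain, hsv, Quaternion.re_add_im]

/-- A unit quaternion witnessing the maximal value `‖a‖ + ‖b‖` of `‖u^m a - u^l b‖`. -/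
lemma quat_witness (a b : Quaternion ℝ) (m l : ℕ) (hlm : l < m) :
    ∃ u : Quaternion ℝ, ‖u‖ = 1 ∧ ‖u ^ m * a - u ^ l * b‖ = ‖a‖ + ‖b‖ := by
  rcases eq_or_ne a 0 with ha | ha
  · exact ⟨1, norm_one, by simp [ha]⟩
  rcases eq_or_ne b 0 with hb | hb
  · exact ⟨1, norm_one, by simp [hb]⟩
  have ha' : ‖a‖ ≠ 0 := norm_ne_zero_iff.mpr ha
  have hb' : ‖b‖ ≠ 0 := norm_ne_zero_iff.mpr hb
  set s : Quaternion ℝ := (-(‖a‖ / ‖b‖)) • (b * a⁻¹) with hsdef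
  have hsnorm : ‖s‖ = 1 := by
    rw [hsdef, norm_smul, norm_mul, norm_inv, Real.norm_eq_abs, abs_neg,
      abs_of_nonneg (by positivity)]
    field_simp
  obtain ⟨u, hu1, hud⟩ := quat_root s hsnorm (m - l) (by omega)
  refine ⟨u, hu1, ?_⟩
  have hm : u ^ m = u ^ l * u ^ (m - l) := by rw [← pow_add]; congr 1; omega
  rw [hm, mul_assoc, ← mul_sub, norm_mul, norm_pow, hu1, one_pow, one_mul, hud, hsdef]
  have h1 : ((-(‖a‖ / ‖b‖)) • (b * a⁻¹)) * a = (-(‖a‖ / ‖b‖)) • b := by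
    rw [smul_mul_assoc, mul_assoc, inv_mul_cancel₀ ha, mul_one]
  rw [h1]
  have h2 : (-(‖a‖ / ‖b‖)) • b - b = -((‖a‖ / ‖b‖ + 1) • b) := by module
  rw [h2, norm_neg, norm_smul, Real.norm_eq_abs, abs_of_nonneg (by positivity)]
  field_simp

/-- Per-term estimate. -/
lemma quat_term_bound (a b : Quaternion ℝ) (hab : a ≠ b) (m l nn : ℕ) (hlm : l ≤ m)
    (hmn : m ≤ nn) (S : ℝ)
    (hS : S = ⨆ u : {q : Quaternion ℝ // ‖q‖ = 1},
      ‖(u : Quaternion ℝ) ^ m * a - (u : Quaternion ℝ) ^ l * b‖ / ‖a - b‖)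
    (R : ℝ) (hR : 1 < R) (q : Quaternion ℝ) (hq : ‖q‖ = R) :
    ‖q ^ m * a - q ^ l * b‖ ≤ S * (R ^ nn * ‖a - b‖) := by
  have hΔ : 0 < ‖a - b‖ := by rwa [norm_pos_iff, sub_ne_zero]
  have hR0 : (0 : ℝ) < R := lt_trans one_pos hR
  have hln : l ≤ nn := hlm.trans hmn
  have hbdd : BddAbove (Set.range fun u : {q : Quaternion ℝ // ‖q‖ = 1} =>
      ‖(u : Quaternion ℝ) ^ m * a - (u : Quaternion ℝ) ^ l * b‖ / ‖a - b‖) := by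
    refine ⟨(‖a‖ + ‖b‖) / ‖a - b‖, ?_⟩
    rintro x ⟨u, rfl⟩
    have h : ‖(u : Quaternion ℝ) ^ m * a - (u : Quaternion ℝ) ^ l * b‖ ≤ ‖a‖ + ‖b‖ := by
      refine le_trans (norm_sub_le _ _) ?_
      simp [norm_mul, norm_pow, u.2]
    show ‖(u : Quaternion ℝ) ^ m * a - (u : Quaternion ℝ) ^ l * b‖ / ‖a - b‖ ≤ (‖a‖ + ‖b‖) / ‖a - b‖
    exact (div_le_div_iff_of_pos_right hΔ).mpr h
  have hkey : ∀ u : Quaternion ℝ, ‖u‖ = 1 → ‖u ^ m * a - u ^ l * b‖ ≤ S * ‖a - b‖ := by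
    intro u hu
    have h := le_ciSup hbdd ⟨u, hu⟩
    rw [← hS] at h
    exact (div_le_iff₀ hΔ).mp h
  rcases eq_or_lt_of_le hlm with heq | hlt
  · have hS1 : ‖a - b‖ ≤ S * ‖a - b‖ := by
      have := hkey 1 norm_one
      simpa using this
    have hS1' : 1 ≤ S :=
      le_of_mul_le_mul_right (by linarith) hΔ
    have heqt : q ^ m * a - q ^ l * b = q ^ m * (a - b) := by rw [mul_sub, heq]
    rw [heqt, norm_mul, norm_pow, hq]
    calc R ^ m * ‖a - b‖ ≤ R ^ nn * ‖a - b‖ := by gcongr <;> exact hR.le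
      _ = 1 * (R ^ nn * ‖a - b‖) := (one_mul _).symm
      _ ≤ S * (R ^ nn * ‖a - b‖) := by gcongr
  · obtain ⟨u, hu1, hueq⟩ := quat_witness a b m l hlt
    have hSab : ‖a‖ + ‖b‖ ≤ S * ‖a - b‖ := hueq ▸ hkey u hu1
    calc ‖q ^ m * a - q ^ l * b‖ ≤ ‖q ^ m * a‖ + ‖q ^ l * b‖ := norm_sub_le _ _
      _ = R ^ m * ‖a‖ + R ^ l * ‖b‖ := by rw [norm_mul, norm_mul, norm_pow, norm_pow, hq]
      _ ≤ R ^ nn * ‖a‖ + R ^ nn * ‖b‖ := by gcongr <;> exact hR.le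
      _ = R ^ nn * (‖a‖ + ‖b‖) := by ring
      _ ≤ R ^ nn * (S * ‖a - b‖) := by gcongr
      _ = S * (R ^ nn * ‖a - b‖) := by ring

/-- Key estimate in the proof of the main theorem: for `R > 1` and `‖q‖ = R`,
`‖ξ₁(q)‖ ≤ M R^n ∑_{j=1}^{k} ‖a_{n_j} − a_{n_{j−1}}‖ + ‖a_{n_0}‖ R^{n_0}`, where
`ξ₁(q) = ∑_{j=1}^{k} (q^{n_j} a_{n_j} − q^{n_{j−1}+1} a_{n_{j−1}}) + q^{n_0} a_{n_0}`. -/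
theorem stmt_12 (k n : ℕ) (N : ℕ → ℕ) (a : ℕ → Quaternion ℝ)
    (hN0 : N 0 = 0) (hNmono : ∀ j, j < k → N j < N (j + 1)) (hNk : N k = n)
    (hadj : ∀ j, 1 ≤ j → j ≤ k → a j ≠ a (j - 1))
    (Mj : ℕ → ℝ)
    (hMj : ∀ j, 1 ≤ j → j ≤ k →
      Mj j = ⨆ q : {q : Quaternion ℝ // ‖q‖ = 1},
        ‖(q : Quaternion ℝ) ^ (N j) * a j -
          (q : Quaternion ℝ) ^ (N (j - 1) + 1) * a (j - 1)‖ / ‖a j - a (j - 1)‖)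
    (M : ℝ) (hM : M = ⨆ j ∈ Finset.Icc 1 k, Mj j)
    (R : ℝ) (hR : 1 < R) (q : Quaternion ℝ) (hq : ‖q‖ = R) :
    ‖(∑ j ∈ Finset.Icc 1 k,
        (q ^ (N j) * a j - q ^ (N (j - 1) + 1) * a (j - 1))) + q ^ (N 0) * a 0‖ ≤
      M * R ^ n * (∑ j ∈ Finset.Icc 1 k, ‖a j - a (j - 1)‖) + ‖a 0‖ * R ^ (N 0) := by
  classical
  have hR0 : (0 : ℝ) < R := lt_trans one_pos hR
  -- monotonicity of N
  have hstep : ∀ j m : ℕ, j + m ≤ k → N j ≤ N (j + m) := by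
    intro j m
    induction m with
    | zero => intro _; simp
    | succ m ih =>
      intro h
      rw [Nat.add_succ]
      exact (ih (by omega)).trans (hNmono (j + m) (by omega)).le
  have hle : ∀ j, j ≤ k → N j ≤ n := by
    intro j hj
    have := hstep j (k - j) (by omega)
    rw [show j + (k - j) = k by omega, hNk] at this
    exact this
  -- Mj j ≤ M
  have hMjM : ∀ j ∈ Finset.Icc 1 k, Mj j ≤ M := by
    intro j hj
    rw [hM]
    have hbdd : BddAbove (Set.range fun i => ⨆ _ : i ∈ Finset.Icc 1 k, Mj i) := by
      refine ⟨∑ i ∈ Finset.Icc 1 k, max (Mj i) 0, ?_⟩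
      rintro x ⟨i, rfl⟩
      show (⨆ _ : i ∈ Finset.Icc 1 k, Mj i) ≤ ∑ i ∈ Finset.Icc 1 k, max (Mj i) 0
      by_cases hi : i ∈ Finset.Icc 1 k
      · rw [ciSup_pos hi]
        exact le_trans (le_max_left _ _)
          (Finset.single_le_sum (f := fun i => max (Mj i) 0) (fun _ _ => le_max_right _ _) hi)
      · have : IsEmpty (i ∈ Finset.Icc 1 k) := ⟨hi⟩
        rw [Real.iSup_of_isEmpty]
        positivity
    calc Mj j = ⨆ _ : j ∈ Finset.Icc 1 k, Mj j := (ciSup_pos (f := fun _ => Mj j) hj).symm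
      _ ≤ _ := le_ciSup hbdd j
  -- per-term estimate
  have hterm : ∀ j ∈ Finset.Icc 1 k,
      ‖q ^ (N j) * a j - q ^ (N (j - 1) + 1) * a (j - 1)‖ ≤
        M * R ^ n * ‖a j - a (j - 1)‖ := by
    intro j hj
    obtain ⟨hj1, hjk⟩ := Finset.mem_Icc.mp hj
    have hlt : N (j - 1) + 1 ≤ N j := by
      have := hNmono (j - 1) (by omega)
      rw [Nat.sub_add_cancel hj1] at this
      omega
    have h1 := quat_term_bound (a j) (a (j - 1)) (hadj j hj1 hjk) (N j) (N (j - 1) + 1) n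
      hlt (hle j hjk) (Mj j) (hMj j hj1 hjk) R hR q hq
    calc ‖q ^ (N j) * a j - q ^ (N (j - 1) + 1) * a (j - 1)‖
        ≤ Mj j * (R ^ n * ‖a j - a (j - 1)‖) := h1
      _ ≤ M * (R ^ n * ‖a j - a (j - 1)‖) :=
          mul_le_mul_of_nonneg_right (hMjM j hj) (by positivity)
      _ = M * R ^ n * ‖a j - a (j - 1)‖ := by ring
  calc ‖(∑ j ∈ Finset.Icc 1 k,
        (q ^ (N j) * a j - q ^ (N (j - 1) + 1) * a (j - 1))) + q ^ (N 0) * a 0‖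
      ≤ ‖∑ j ∈ Finset.Icc 1 k,
          (q ^ (N j) * a j - q ^ (N (j - 1) + 1) * a (j - 1))‖ + ‖q ^ (N 0) * a 0‖ :=
        norm_add_le _ _
    _ ≤ (∑ j ∈ Finset.Icc 1 k, M * R ^ n * ‖a j - a (j - 1)‖) + ‖a 0‖ * R ^ (N 0) := by
        refine add_le_add (le_trans (norm_sum_le _ _) (Finset.sum_le_sum hterm)) (le_of_eq ?_)
        rw [norm_mul, norm_pow, hq, mul_comm]
    _ = M * R ^ n * (∑ j ∈ Finset.Icc 1 k, ‖a j - a (j - 1)‖) + ‖a 0‖ * R ^ (N 0) := by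
        rw [← Finset.mul_sum]
end
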